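/- arXiv:1910.10844 — 10 statements merged into one kernel-verified Lean document; each statement's English description precedes it below -/
import Mathlib

section
/- If ℓ : ℝⁿ × Z → ℝ is a Carathéodory function (continuous in w for each z, measurable in z for each w) relative to a probability space (Z, 𝒵, ℙ) that is locally inf-integrable, then the true risk R : ℝⁿ → ℝ defined by R(w) = ∫ ℓ(w,z) dℙ(z) is lower semicontinuous. -/
open MeasureTheory Metric Set Filter Topology

/-- If `ℓ : ℝⁿ × Z → ℝ` is a Carathéodory function (continuous in `w`
for each `z`, measurable in `z` for each `w`) relative to a probability space `(Z, 𝒵, ℙ)`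
that is locally inf-integrable, then the true risk `R(w) = ∫ ℓ(w,z) dℙ(z)` (assumed
well defined and real-valued, i.e. `ℓ(w,·)` integrable for all `w`) is lower
semicontinuous. -/
theorem true_risk_lowerSemicontinuous
    {E Z : Type*} [NormedAddCommGroup E] [NormedSpace ℝ E] [FiniteDimensional ℝ E]
    [MeasurableSpace Z] (P : Measure Z) [IsProbabilityMeasure P]
    (ℓ : E → Z → ℝ)
    (hcont : ∀ z, Continuous fun w => ℓ w z)
    (hmeas : ∀ w, Measurable fun z => ℓ w z)
    (hint : ∀ w, Integrable (fun z => ℓ w z) P)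
    (hlocinf : ∀ wbar : E, ∃ ρ > (0 : ℝ),
      Integrable (fun z => min 0 (⨅ w : closedBall wbar ρ, ℓ (↑w) z)) P) :
    LowerSemicontinuous fun w => ∫ z, ℓ w z ∂P := by
  intro wbar y hy
  by_contra hcon
  rw [Filter.not_eventually] at hcon
  obtain ⟨ρ, hρ, hg_int⟩ := hlocinf wbar
  set g : Z → ℝ := fun z => min 0 (⨅ w : closedBall wbar ρ, ℓ (↑w) z) with hgdef
  -- the infimum over the compact ball is attained/bounded below
  have hbdd : ∀ z, BddBelow (range fun w : closedBall wbar ρ => ℓ (↑w) z) := by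
    intro z
    have hc : IsCompact (closedBall wbar ρ) := isCompact_closedBall _ _
    have := hc.bddBelow_image ((hcont z).continuousOn)
    rwa [Set.image_eq_range] at this
  have hg_le : ∀ z, ∀ w ∈ closedBall wbar ρ, g z ≤ ℓ w z := by
    intro z w hw
    exact le_trans (min_le_right _ _) (ciInf_le (hbdd z) ⟨w, hw⟩)
  have hwbar_mem : wbar ∈ closedBall wbar ρ := mem_closedBall_self hρ.le
  -- extract a sequence tending to wbar inside the ball with risk ≤ y
  have hball : ∀ᶠ w in 𝓝 wbar, w ∈ closedBall wbar ρ :=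
    (closedBall_mem_nhds wbar hρ : closedBall wbar ρ ∈ 𝓝 wbar)
  have hfreq : ∃ᶠ w in 𝓝 wbar, (∫ z, ℓ w z ∂P) ≤ y ∧ w ∈ closedBall wbar ρ := by
    refine (hcon.mono ?_).and_eventually hball
    intro w hw
    exact not_lt.1 hw
  obtain ⟨u, hu, hu_prop⟩ := Filter.exists_seq_forall_of_frequently hfreq
  set c : ℝ := ∫ z, g z ∂P with hc
  have hcy : c ≤ y := by
    have h1 : c ≤ ∫ z, ℓ (u 0) z ∂P :=
      integral_mono hg_int (hint (u 0)) fun z => hg_le z (u 0) (hu_prop 0).2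
    exact h1.trans (hu_prop 0).1
  -- Fatou
  have hF : ∀ n, AEMeasurable (fun z => ENNReal.ofReal (ℓ (u n) z - g z)) P := fun n =>
    ENNReal.measurable_ofReal.comp_aemeasurable (((hint (u n)).sub hg_int).aemeasurable)
  have fatou := MeasureTheory.lintegral_liminf_le' (μ := P) (u := Filter.atTop) hF
  have hlim : ∀ z, Filter.liminf (fun n => ENNReal.ofReal (ℓ (u n) z - g z)) Filter.atTop
      = ENNReal.ofReal (ℓ wbar z - g z) := by
    intro z
    have h1 : Filter.Tendsto (fun n => ℓ (u n) z - g z) Filter.atTop (𝓝 (ℓ wbar z - g z)) :=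
      (((hcont z).tendsto wbar).comp hu).sub_const _
    exact ((ENNReal.continuous_ofReal.tendsto _).comp h1).liminf_eq
  have hLHS : (∫⁻ z, Filter.liminf (fun n => ENNReal.ofReal (ℓ (u n) z - g z)) Filter.atTop ∂P)
      = ENNReal.ofReal ((∫ z, ℓ wbar z ∂P) - c) := by
    rw [lintegral_congr fun z => hlim z]
    rw [← ofReal_integral_eq_lintegral_ofReal (f := fun z => ℓ wbar z - g z) ((hint wbar).sub hg_int)
      (Filter.Eventually.of_forall fun z => sub_nonneg.2 (hg_le z wbar hwbar_mem))]
    rw [integral_sub (hint wbar) hg_int]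
  have hterm : ∀ n, (∫⁻ z, ENNReal.ofReal (ℓ (u n) z - g z) ∂P) ≤ ENNReal.ofReal (y - c) := by
    intro n
    rw [← ofReal_integral_eq_lintegral_ofReal (f := fun z => ℓ (u n) z - g z) ((hint (u n)).sub hg_int)
      (Filter.Eventually.of_forall fun z => sub_nonneg.2 (hg_le z (u n) (hu_prop n).2))]
    rw [integral_sub (hint (u n)) hg_int]
    exact ENNReal.ofReal_le_ofReal (by linarith [(hu_prop n).1])
  have hRHS : Filter.liminf (fun n => ∫⁻ z, ENNReal.ofReal (ℓ (u n) z - g z) ∂P) Filter.atTop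
      ≤ ENNReal.ofReal (y - c) := by
    calc Filter.liminf (fun n => ∫⁻ z, ENNReal.ofReal (ℓ (u n) z - g z) ∂P) Filter.atTop
        ≤ Filter.liminf (fun _ : ℕ => ENNReal.ofReal (y - c)) Filter.atTop :=
          Filter.liminf_le_liminf (Filter.Eventually.of_forall hterm)
      _ = ENNReal.ofReal (y - c) := Filter.liminf_const _
  rw [hLHS] at fatou
  have hfinal : (∫ z, ℓ wbar z ∂P) - c ≤ y - c := by
    have := fatou.trans hRHS
    exact (ENNReal.ofReal_le_ofReal_iff (by linarith)).1 this
  linarith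
end

section
/- Suppose W ⊆ ℝⁿ is compact, ℓ : ℝⁿ × Z → ℝ is a locally sup-integrable Carathéodory function, and for every w ∈ W the moment generating function of ℓ(w,·) − R(w) is real-valued (finite) in a neighborhood of zero. Then for any ε > 0, γ > 0, there exist constants η > 0 and β > 0, independent of m, such that for every m ≥ 1, ℙ^m( sup_{w∈W} { R(w) − R_m^γ(w) } ≤ ε ) ≥ 1 − η e^{−βm}. -/
open MeasureTheory Metric Set
open Filter Topology
open scoped ENNReal NNReal

lemma abs_exp_sub_one_le (y : ℝ) : |Real.exp y - 1| ≤ |y| * Real.exp |y| := by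
  rcases le_or_gt 0 y with hy | hy
  · rw [abs_of_nonneg (by linarith [Real.one_le_exp hy]), abs_of_nonneg hy]
    have h1 : Real.exp (-y) * Real.exp y = 1 := by rw [← Real.exp_add]; simp
    nlinarith [Real.add_one_le_exp (-y), Real.exp_pos y]
  · rw [abs_of_nonpos (by linarith [Real.exp_lt_one_iff.2 hy] : Real.exp y - 1 ≤ 0),
      abs_of_neg hy]
    have h2 : 1 ≤ Real.exp (-y) := Real.one_le_exp (by linarith)
    nlinarith [Real.add_one_le_exp y]

lemma exp_abs_le_add (c x : ℝ) : Real.exp (c * |x|) ≤ Real.exp (c * x) + Real.exp (-c * x) := by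
  rcases le_or_gt 0 x with hx | hx
  · rw [abs_of_nonneg hx]
    nlinarith [Real.exp_pos (-c * x)]
  · rw [abs_of_neg hx]
    have : c * -x = -c * x := by ring
    rw [this]
    nlinarith [Real.exp_pos (c * x)]

lemma quot_bound {ε₀ : ℝ} (hε₀ : 0 < ε₀) {τ : ℝ} (hτ : τ ∈ Set.Ioc 0 (ε₀ / 2)) (x : ℝ) :
    |(Real.exp (τ * x) - 1) / τ| ≤ 2 / ε₀ * (Real.exp (ε₀ * x) + Real.exp (-ε₀ * x)) := by
  obtain ⟨hτ0, hτε⟩ := hτ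
  have h1 : |(Real.exp (τ * x) - 1) / τ| ≤ |x| * Real.exp (τ * |x|) := by
    rw [abs_div, abs_of_pos hτ0, div_le_iff₀ hτ0]
    calc |Real.exp (τ * x) - 1| ≤ |τ * x| * Real.exp |τ * x| := abs_exp_sub_one_le _
      _ = |x| * Real.exp (τ * |x|) * τ := by
          rw [abs_mul, abs_of_pos hτ0]; ring
  have hx2 : |x| ≤ 2 / ε₀ * Real.exp (ε₀ / 2 * |x|) := by
    have h2 : ε₀ / 2 * |x| ≤ Real.exp (ε₀ / 2 * |x|) := by
      linarith [Real.add_one_le_exp (ε₀ / 2 * |x|)]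
    calc |x| = 2 / ε₀ * (ε₀ / 2 * |x|) := by field_simp
      _ ≤ 2 / ε₀ * Real.exp (ε₀ / 2 * |x|) :=
          mul_le_mul_of_nonneg_left h2 (by positivity)
  have h3 : Real.exp (τ * |x|) ≤ Real.exp (ε₀ / 2 * |x|) :=
    Real.exp_le_exp.2 (mul_le_mul_of_nonneg_right hτε (abs_nonneg x))
  calc |(Real.exp (τ * x) - 1) / τ| ≤ |x| * Real.exp (τ * |x|) := h1
    _ ≤ (2 / ε₀ * Real.exp (ε₀ / 2 * |x|)) * Real.exp (ε₀ / 2 * |x|) := by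
        apply mul_le_mul hx2 h3 (Real.exp_pos _).le
        positivity
    _ = 2 / ε₀ * Real.exp (ε₀ * |x|) := by
        rw [mul_assoc, ← Real.exp_add]; ring_nf
    _ ≤ 2 / ε₀ * (Real.exp (ε₀ * x) + Real.exp (-ε₀ * x)) := by
        have := exp_abs_le_add ε₀ x
        have h20 : (0:ℝ) ≤ 2 / ε₀ := by positivity
        nlinarith

lemma exists_mgf_le {Z : Type*} [MeasurableSpace Z] (P : Measure Z) [IsProbabilityMeasure P]
    (X : Z → ℝ) (hXm : Measurable X) (hmean : ∫ z, X z ∂P = 0)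
    {ε₀ : ℝ} (hε₀ : 0 < ε₀)
    (hI : ∀ τ : ℝ, |τ| ≤ ε₀ → Integrable (fun z => Real.exp (τ * X z)) P)
    {a : ℝ} (ha : 0 < a) :
    ∃ t : ℝ, 0 < t ∧ t ≤ ε₀ ∧ ProbabilityTheory.mgf X P t ≤ Real.exp (t * a) := by
  set g : Z → ℝ := fun z => 2 / ε₀ * (Real.exp (ε₀ * X z) + Real.exp (-ε₀ * X z)) with hgdef
  have hg : Integrable g P := by
    apply Integrable.const_mul
    exact (hI ε₀ (by rw [abs_of_pos hε₀])).add (hI (-ε₀) (by rw [abs_neg, abs_of_pos hε₀]))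
  have hmemIoc : ∀ᶠ τ in nhdsWithin (0:ℝ) (Set.Ioi 0), τ ∈ Set.Ioc 0 (ε₀ / 2) :=
    Ioc_mem_nhdsGT_of_mem ⟨le_rfl, half_pos hε₀⟩
  have hF : Tendsto (fun τ : ℝ => ∫ z, (Real.exp (τ * X z) - 1) / τ ∂P)
      (nhdsWithin 0 (Set.Ioi 0)) (𝓝 (∫ z, X z ∂P)) := by
    apply tendsto_integral_filter_of_dominated_convergence g
    · exact Eventually.of_forall fun τ =>
        (((Real.measurable_exp.comp (hXm.const_mul τ)).sub measurable_const).div_const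
          τ).aestronglyMeasurable
    · filter_upwards [hmemIoc] with τ hτ
      exact Eventually.of_forall fun z => by
        have h := quot_bound hε₀ hτ (X z)
        rw [abs_div] at h
        simpa [Real.norm_eq_abs, hgdef, neg_mul] using h
    · exact hg
    · refine Eventually.of_forall fun z => ?_
      have hx : HasDerivAt (fun τ : ℝ => Real.exp (τ * X z)) (X z) 0 := by
        have h1 : HasDerivAt (fun τ : ℝ => τ * X z) (X z) 0 := hasDerivAt_mul_const (X z)
        simpa using h1.exp
      have h2 := hasDerivAt_iff_tendsto_slope.1 hx
      have h3 : Tendsto (slope (fun τ : ℝ => Real.exp (τ * X z)) 0)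
          (nhdsWithin 0 (Set.Ioi 0)) (𝓝 (X z)) :=
        h2.mono_left (nhdsWithin_mono 0 fun τ hτ => Set.mem_compl_singleton_iff.2 (ne_of_gt hτ))
      refine h3.congr fun τ => ?_
      simp [slope_def_field]
  rw [hmean] at hF
  have hlt : ∀ᶠ τ in nhdsWithin (0:ℝ) (Set.Ioi 0),
      (∫ z, (Real.exp (τ * X z) - 1) / τ ∂P) < a := hF.eventually_lt_const ha
  obtain ⟨t, htlt, ht⟩ := (hlt.and hmemIoc).exists
  have htε₀ : t ≤ ε₀ := le_trans ht.2 (by linarith)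
  have hIt : Integrable (fun z => Real.exp (t * X z)) P :=
    hI t (by rw [abs_of_pos ht.1]; exact htε₀)
  have hcalc : ∫ z, (Real.exp (t * X z) - 1) / t ∂P = (ProbabilityTheory.mgf X P t - 1) / t := by
    rw [integral_div]
    congr 1
    rw [integral_sub hIt (integrable_const 1), integral_const]
    simp [ProbabilityTheory.mgf, measure_univ]
  have hmgf_lt : ProbabilityTheory.mgf X P t < 1 + t * a := by
    rw [hcalc, div_lt_iff₀ ht.1] at htlt
    linarith
  exact ⟨t, ht.1, htε₀, le_trans hmgf_lt.le (by linarith [Real.add_one_le_exp (t * a)])⟩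

lemma chernoff_center {Z : Type*} [MeasurableSpace Z] (P : Measure Z) [IsProbabilityMeasure P]
    (X : Z → ℝ) (hXm : Measurable X) (hmean : ∫ z, X z ∂P = 0)
    {ε₀ : ℝ} (hε₀ : 0 < ε₀)
    (hI : ∀ τ : ℝ, |τ| ≤ ε₀ → Integrable (fun z => Real.exp (τ * X z)) P)
    {a : ℝ} (ha : 0 < a) :
    ∃ β > (0:ℝ), ∀ m : ℕ, 1 ≤ m →
      (Measure.pi fun _ : Fin m => P) {s | a ≤ (1 / (m:ℝ)) * ∑ i, X (s i)}
        ≤ ENNReal.ofReal (Real.exp (-β * m)) := by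
  obtain ⟨t, ht0, htε₀, hmgf⟩ := exists_mgf_le P X hXm hmean hε₀ hI (half_pos ha)
  refine ⟨t * a / 2, by positivity, fun m hm => ?_⟩
  letI : MeasureSpace Z := ⟨P⟩
  haveI : IsProbabilityMeasure (volume : Measure Z) := ‹IsProbabilityMeasure P›
  set μ : Measure (Fin m → Z) := Measure.pi fun _ : Fin m => P with hμdef
  haveI : IsProbabilityMeasure μ := by
    rw [hμdef]; infer_instance
  have hIt : Integrable (fun z => Real.exp (t * X z)) P :=
    hI t (by rw [abs_of_pos ht0]; exact htε₀)
  have hexpsum : ∀ s : Fin m → Z, Real.exp (t * ∑ i, X (s i)) = ∏ i, Real.exp (t * X (s i)) :=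
    fun s => by rw [Finset.mul_sum, Real.exp_sum]
  have hprod : Integrable (fun s : Fin m → Z => ∏ i, Real.exp (t * X (s i))) μ :=
    Integrable.fintype_prod (f := fun _ z => Real.exp (t * X z)) fun _ => hIt
  have hIY : Integrable (fun s : Fin m → Z => Real.exp (t * ∑ i, X (s i))) μ := by
    have := hprod
    rwa [show (fun s : Fin m → Z => ∏ i, Real.exp (t * X (s i)))
      = fun s : Fin m → Z => Real.exp (t * ∑ i, X (s i)) from funext fun s => (hexpsum s).symm]
      at this
  have hmgfY : ProbabilityTheory.mgf (fun s : Fin m → Z => ∑ i, X (s i)) μ t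
      = (ProbabilityTheory.mgf X P t) ^ m := by
    show ∫ s, Real.exp (t * ∑ i, X (s i)) ∂μ = (∫ z, Real.exp (t * X z) ∂P) ^ m
    calc ∫ s, Real.exp (t * ∑ i, X (s i)) ∂μ
        = ∫ s : Fin m → Z, ∏ i, Real.exp (t * X (s i)) := by simp_rw [hexpsum]; rfl
      _ = (∫ z, Real.exp (t * X z)) ^ (Fintype.card (Fin m)) :=
          integral_fintype_prod_eq_pow (ι := Fin m) fun z => Real.exp (t * X z)
      _ = (∫ z, Real.exp (t * X z) ∂P) ^ m := by rw [Fintype.card_fin]; rfl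
  have key := ProbabilityTheory.measure_ge_le_exp_mul_mgf (μ := μ)
    (X := fun s : Fin m → Z => ∑ i, X (s i)) ((m:ℝ) * a) ht0.le hIY
  have hm0 : (0:ℝ) < m := by exact_mod_cast Nat.lt_of_lt_of_le Nat.zero_lt_one hm
  have hsub : {s : Fin m → Z | a ≤ (1 / (m:ℝ)) * ∑ i, X (s i)}
      ⊆ {s | (m:ℝ) * a ≤ ∑ i, X (s i)} := by
    intro s hs
    simp only [Set.mem_setOf_eq] at hs ⊢
    calc (m:ℝ) * a ≤ (m:ℝ) * ((1 / (m:ℝ)) * ∑ i, X (s i)) :=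
          mul_le_mul_of_nonneg_left hs hm0.le
      _ = ∑ i, X (s i) := by field_simp
  refine le_trans (measure_mono hsub) ?_
  have hne : μ {s | (m:ℝ) * a ≤ ∑ i, X (s i)} ≠ ⊤ := measure_ne_top μ _
  rw [← ENNReal.ofReal_toReal hne]
  apply ENNReal.ofReal_le_ofReal
  calc (μ {s | (m:ℝ) * a ≤ ∑ i, X (s i)}).toReal
      ≤ Real.exp (-t * ((m:ℝ) * a)) * (ProbabilityTheory.mgf X P t) ^ m := by
        rw [← hmgfY]; exact key
    _ ≤ Real.exp (-t * ((m:ℝ) * a)) * (Real.exp (t * (a / 2))) ^ m := by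
        gcongr
        exact ProbabilityTheory.mgf_nonneg
    _ = Real.exp (-(t * a / 2) * m) := by
        rw [← Real.exp_nat_mul, ← Real.exp_add]
        ring_nf

/-- The true risk `R(w) = ∫ ℓ(w,z) dℙ(z)`. -/
noncomputable def trueRisk {E Z : Type*} [MeasurableSpace Z]
    (P : Measure Z) (ℓ : E → Z → ℝ) (w : E) : ℝ :=
  ∫ z, ℓ w z ∂P

/-- The empirical risk `R_m(w) = (1/m) ∑ᵢ ℓ(w, zᵢ)` of the sample `s = (z₁,…,z_m)`. -/
noncomputable def empRisk {E Z : Type*} (ℓ : E → Z → ℝ) {m : ℕ}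
    (s : Fin m → Z) (w : E) : ℝ :=
  (1 / (m : ℝ)) * ∑ i, ℓ w (s i)

/-- The diametrical risk `R_m^γ(w) = sup_{‖v‖ ≤ γ} R_m(w + v)`. -/
noncomputable def diamRisk {E Z : Type*} [NormedAddCommGroup E] (ℓ : E → Z → ℝ)
    (γ : ℝ) {m : ℕ} (s : Fin m → Z) (w : E) : ℝ :=
  ⨆ v : closedBall (0 : E) γ, empRisk ℓ s (w + ↑v)


lemma usc_radius {E Z : Type*} [NormedAddCommGroup E] [NormedSpace ℝ E] [FiniteDimensional ℝ E]
    [MeasurableSpace Z] (P : Measure Z) [IsProbabilityMeasure P]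
    (ℓ : E → Z → ℝ)
    (hcont : ∀ z, Continuous fun w => ℓ w z)
    (hmeas : ∀ w, Measurable fun z => ℓ w z)
    (hint : ∀ w, Integrable (fun z => ℓ w z) P)
    (hlocsup : ∀ wbar : E, ∃ ρ > (0 : ℝ),
      Integrable (fun z => max 0 (⨆ w : closedBall wbar ρ, ℓ (↑w) z)) P)
    (wbar : E) {γ δ : ℝ} (hγ : 0 < γ) (hδ : 0 < δ) :
    ∃ r, 0 < r ∧ r ≤ γ ∧ ∀ w ∈ closedBall wbar r,
      trueRisk P ℓ w ≤ trueRisk P ℓ wbar + δ := by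
  obtain ⟨ρ, hρ, hgint⟩ := hlocsup wbar
  set g : Z → ℝ := fun z => max 0 (⨆ w : closedBall wbar ρ, ℓ (↑w) z) with hgdef
  by_contra hcon
  push_neg at hcon
  set r : ℕ → ℝ := fun k => min ρ γ * (1 / ((k:ℝ) + 1)) with hrdef
  have hminpos : 0 < min ρ γ := lt_min hρ hγ
  have hr0 : ∀ k, 0 < r k := fun k => by positivity
  have hrle : ∀ k, r k ≤ min ρ γ := by
    intro k
    rw [hrdef]
    calc min ρ γ * (1 / ((k:ℝ) + 1)) ≤ min ρ γ * 1 := by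
          apply mul_le_mul_of_nonneg_left _ hminpos.le
          rw [div_le_one (by positivity)]
          simp [Nat.cast_nonneg]
      _ = min ρ γ := mul_one _
  have hrγ : ∀ k, r k ≤ γ := fun k => le_trans (hrle k) (min_le_right _ _)
  have hrρ : ∀ k, r k ≤ ρ := fun k => le_trans (hrle k) (min_le_left _ _)
  choose w hw hR using fun k => hcon (r k) (hr0 k) (hrγ k)
  have hwρ : ∀ k, w k ∈ closedBall wbar ρ := fun k =>
    closedBall_subset_closedBall (hrρ k) (hw k)
  have hle_g : ∀ u, u ∈ closedBall wbar ρ → ∀ z, ℓ u z ≤ g z := by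
    intro u hu z
    refine le_max_of_le_right ?_
    have hbdd : BddAbove (Set.range fun w : closedBall wbar ρ => ℓ (↑w) z) := by
      have heq : (Set.range fun w : closedBall wbar ρ => ℓ (↑w) z)
          = (fun w => ℓ w z) '' closedBall wbar ρ :=
        (Set.image_eq_range (fun w => ℓ w z) (closedBall wbar ρ)).symm
      rw [heq]
      exact (isCompact_closedBall wbar ρ).bddAbove_image (hcont z).continuousOn
    exact le_ciSup hbdd ⟨u, hu⟩
  have hconv : ∀ z, Tendsto (fun k => ℓ (w k) z) atTop (𝓝 (ℓ wbar z)) := by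
    intro z
    have hrt : Tendsto r atTop (𝓝 0) := by
      rw [hrdef]
      simpa using (tendsto_one_div_add_atTop_nhds_zero_nat).const_mul (min ρ γ)
    have hwt : Tendsto w atTop (𝓝 wbar) := by
      rw [tendsto_iff_dist_tendsto_zero]
      exact squeeze_zero (fun k => dist_nonneg) (fun k => hw k) hrt
    exact ((hcont z).tendsto wbar).comp hwt
  have hg_aem := hgint.aemeasurable
  have hfk_meas : ∀ k, AEMeasurable (fun z => ENNReal.ofReal (g z - ℓ (w k) z)) P := fun k =>
    ENNReal.measurable_ofReal.comp_aemeasurable (hg_aem.sub (hmeas (w k)).aemeasurable)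
  have fatou := lintegral_liminf_le' (u := atTop) hfk_meas
  have hliminf : ∀ z, Filter.liminf (fun k => ENNReal.ofReal (g z - ℓ (w k) z)) atTop
      = ENNReal.ofReal (g z - ℓ wbar z) := fun z =>
    Filter.Tendsto.liminf_eq
      ((ENNReal.continuous_ofReal.tendsto _).comp (tendsto_const_nhds.sub (hconv z)))
  have hgsub_int : ∀ u, u ∈ closedBall wbar ρ → Integrable (fun z => g z - ℓ u z) P :=
    fun u _ => hgint.sub (hint u)
  have hwbar_mem : wbar ∈ closedBall wbar ρ := mem_closedBall_self hρ.le
  set G := ∫ z, g z ∂P with hGdef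
  have hint_k : ∀ u, u ∈ closedBall wbar ρ →
      ∫ z, (g z - ℓ u z) ∂P = G - trueRisk P ℓ u := fun u _ =>
    integral_sub hgint (hint u)
  have hRk_lb : ∀ k, trueRisk P ℓ (w k) ≤ G :=
    fun k => integral_mono (hint (w k)) hgint (hle_g (w k) (hwρ k))
  have hG_big : trueRisk P ℓ wbar + δ < G := lt_of_lt_of_le (hR 0) (hRk_lb 0)
  have hL : ∫⁻ z, ENNReal.ofReal (g z - ℓ wbar z) ∂P
      = ENNReal.ofReal (G - trueRisk P ℓ wbar) := by
    rw [← hint_k wbar hwbar_mem]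
    exact (ofReal_integral_eq_lintegral_ofReal (hgsub_int wbar hwbar_mem)
      (Eventually.of_forall fun z => sub_nonneg.2 (hle_g wbar hwbar_mem z))).symm
  have hRHS : ∀ k, ∫⁻ z, ENNReal.ofReal (g z - ℓ (w k) z) ∂P
      ≤ ENNReal.ofReal (G - trueRisk P ℓ wbar - δ) := by
    intro k
    rw [← ofReal_integral_eq_lintegral_ofReal (hgsub_int _ (hwρ k))
      (Eventually.of_forall fun z => sub_nonneg.2 (hle_g _ (hwρ k) z))]
    apply ENNReal.ofReal_le_ofReal
    rw [hint_k _ (hwρ k)]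
    linarith [hR k]
  have final : ENNReal.ofReal (G - trueRisk P ℓ wbar)
      ≤ ENNReal.ofReal (G - trueRisk P ℓ wbar - δ) := by
    calc ENNReal.ofReal (G - trueRisk P ℓ wbar)
        = ∫⁻ z, ENNReal.ofReal (g z - ℓ wbar z) ∂P := hL.symm
      _ = ∫⁻ z, Filter.liminf (fun k => ENNReal.ofReal (g z - ℓ (w k) z)) atTop ∂P :=
          lintegral_congr fun z => (hliminf z).symm
      _ ≤ Filter.liminf (fun k => ∫⁻ z, ENNReal.ofReal (g z - ℓ (w k) z) ∂P) atTop := fatou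
      _ ≤ Filter.liminf (fun _ : ℕ => ENNReal.ofReal (G - trueRisk P ℓ wbar - δ)) atTop :=
          Filter.liminf_le_liminf (Eventually.of_forall hRHS)
      _ = ENNReal.ofReal (G - trueRisk P ℓ wbar - δ) := Filter.liminf_const _
  rw [ENNReal.ofReal_le_ofReal_iff (by linarith)] at final
  linarith

/-- **generalization error in DRM.** Suppose `W ⊆ ℝⁿ` is compact,
`ℓ` is a locally sup-integrable Carathéodory function, and for every `w ∈ W` the
moment generating function of `ℓ(w,·) − R(w)` is real-valued (finite) in a
neighborhood of zero. Then for any `ε > 0`, `γ > 0`, there exist `η > 0`, `β > 0`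
(independent of `m`) such that for every `m ≥ 1`,
`ℙ^m( sup_{w∈W} { R(w) − R_m^γ(w) } ≤ ε ) ≥ 1 − η e^{−βm}`. -/
theorem drm_generalization_error
    {E Z : Type*} [NormedAddCommGroup E] [NormedSpace ℝ E] [FiniteDimensional ℝ E]
    [MeasurableSpace Z] (P : Measure Z) [IsProbabilityMeasure P]
    (W : Set E) (hW : IsCompact W)
    (ℓ : E → Z → ℝ)
    (hcont : ∀ z, Continuous fun w => ℓ w z)
    (hmeas : ∀ w, Measurable fun z => ℓ w z)
    (hint : ∀ w, Integrable (fun z => ℓ w z) P)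
    (hlocsup : ∀ wbar : E, ∃ ρ > (0 : ℝ),
      Integrable (fun z => max 0 (⨆ w : closedBall wbar ρ, ℓ (↑w) z)) P)
    (hmgf : ∀ w ∈ W, ∃ ε₀ > (0 : ℝ), ∀ τ : ℝ, |τ| ≤ ε₀ →
      Integrable (fun z => Real.exp (τ * (ℓ w z - trueRisk P ℓ w))) P)
    (ε γ : ℝ) (hε : 0 < ε) (hγ : 0 < γ) :
    ∃ η > (0 : ℝ), ∃ β > (0 : ℝ), ∀ m : ℕ, 1 ≤ m →
      ENNReal.ofReal (1 - η * Real.exp (-β * m)) ≤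
        Measure.pi (fun _ : Fin m => P)
          {s | ∀ w ∈ W, trueRisk P ℓ w - diamRisk ℓ γ s w ≤ ε} := by
  have husc : ∀ wbar : E, ∃ r, 0 < r ∧ r ≤ γ ∧ ∀ w ∈ closedBall wbar r,
      trueRisk P ℓ w ≤ trueRisk P ℓ wbar + ε / 2 :=
    fun wbar => usc_radius P ℓ hcont hmeas hint hlocsup wbar hγ (half_pos hε)
  choose rad hrad0 hradγ hradusc using husc
  have hcher : ∀ wbar ∈ W, ∃ β > (0:ℝ), ∀ m : ℕ, 1 ≤ m →
      (Measure.pi fun _ : Fin m => P)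
        {s | ε / 2 ≤ (1 / (m:ℝ)) * ∑ i, (trueRisk P ℓ wbar - ℓ wbar (s i))}
        ≤ ENNReal.ofReal (Real.exp (-β * m)) := by
    intro wbar hwbar
    obtain ⟨ε₀, hε₀, hImgf⟩ := hmgf wbar hwbar
    have hXm : Measurable fun z => trueRisk P ℓ wbar - ℓ wbar z :=
      measurable_const.sub (hmeas wbar)
    have hmean : ∫ z, (trueRisk P ℓ wbar - ℓ wbar z) ∂P = 0 := by
      rw [integral_sub (integrable_const _) (hint wbar), integral_const]
      simp [trueRisk, measure_univ]
    have hI : ∀ τ : ℝ, |τ| ≤ ε₀ →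
        Integrable (fun z => Real.exp (τ * (trueRisk P ℓ wbar - ℓ wbar z))) P := by
      intro τ hτ
      have h1 := hImgf (-τ) (by rwa [abs_neg])
      have h2 : (fun z => Real.exp (τ * (trueRisk P ℓ wbar - ℓ wbar z)))
          = fun z => Real.exp (-τ * (ℓ wbar z - trueRisk P ℓ wbar)) :=
        funext fun z => by ring_nf
      rw [h2]; exact h1
    exact chernoff_center P _ hXm hmean hε₀ hI (half_pos hε)
  choose! βc hβc0 hβcB using hcher
  have hcover : W ⊆ ⋃ wbar ∈ W, ball wbar (rad wbar) :=
    fun w hw => Set.mem_biUnion hw (mem_ball_self (hrad0 w))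
  obtain ⟨tset, htsub, htfin, htcov⟩ :=
    hW.elim_finite_subcover_image (fun w _ => isOpen_ball) hcover
  classical
  set T : Finset E := htfin.toFinset with hTdef
  have hTmem : ∀ x, x ∈ T ↔ x ∈ tset := fun x => htfin.mem_toFinset
  set β : ℝ := if h : T.Nonempty then T.inf' h βc else 1 with hβdef
  have hβ0 : 0 < β := by
    rw [hβdef]; split_ifs with h
    · obtain ⟨j, hj, hjeq⟩ := Finset.exists_mem_eq_inf' h βc
      rw [hjeq]; exact hβc0 j (htsub ((hTmem j).1 hj))
    · exact one_pos
  have hβle : ∀ j ∈ T, β ≤ βc j := by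
    intro j hj
    rw [hβdef, dif_pos ⟨j, hj⟩]
    exact Finset.inf'_le _ hj
  refine ⟨(T.card : ℝ) + 1, by positivity, β, hβ0, fun m hm => ?_⟩
  have hm0 : (0:ℝ) < m := by exact_mod_cast Nat.lt_of_lt_of_le Nat.zero_lt_one hm
  set μ : Measure (Fin m → Z) := Measure.pi fun _ : Fin m => P with hμdef
  haveI : IsProbabilityMeasure μ := by rw [hμdef]; infer_instance
  set Bad : Set (Fin m → Z) :=
    ⋃ j ∈ T, {s | ε / 2 ≤ (1 / (m:ℝ)) * ∑ i, (trueRisk P ℓ j - ℓ j (s i))} with hBdef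
  have hBadMeas : MeasurableSet Bad := by
    apply Finset.measurableSet_biUnion
    intro j _
    have hmeas' : Measurable fun s : Fin m → Z =>
        (1 / (m:ℝ)) * ∑ i, (trueRisk P ℓ j - ℓ j (s i)) :=
      (Finset.measurable_sum Finset.univ fun i _ =>
        (measurable_const.sub ((hmeas j).comp (measurable_pi_apply i)))).const_mul _
    exact measurableSet_le measurable_const hmeas'
  have hsubset : Badᶜ ⊆ {s : Fin m → Z | ∀ w ∈ W, trueRisk P ℓ w - diamRisk ℓ γ s w ≤ ε} := by
    intro s hs w hw
    have hwcov := htcov hw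
    rw [Set.mem_iUnion₂] at hwcov
    obtain ⟨j, hjs, hjball⟩ := hwcov
    have hjT : j ∈ T := (hTmem j).2 hjs
    have hgood : ¬ (ε / 2 ≤ (1 / (m:ℝ)) * ∑ i, (trueRisk P ℓ j - ℓ j (s i))) := by
      intro hcontra
      exact hs (Set.mem_iUnion₂.2 ⟨j, hjT, hcontra⟩)
    push_neg at hgood
    have hsum : (1 / (m:ℝ)) * ∑ i, (trueRisk P ℓ j - ℓ j (s i))
        = trueRisk P ℓ j - empRisk ℓ s j := by
      have hs' : ∑ i : Fin m, (trueRisk P ℓ j - ℓ j (s i))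
          = (m:ℝ) * trueRisk P ℓ j - ∑ i, ℓ j (s i) := by
        rw [Finset.sum_sub_distrib, Finset.sum_const, Finset.card_univ, Fintype.card_fin,
          nsmul_eq_mul]
      rw [hs', empRisk]
      field_simp
    have hdiam : empRisk ℓ s j ≤ diamRisk ℓ γ s w := by
      have hbdd : BddAbove (Set.range fun v : closedBall (0:E) γ => empRisk ℓ s (w + ↑v)) := by
        have heq : (Set.range fun v : closedBall (0:E) γ => empRisk ℓ s (w + ↑v))
            = (fun v => empRisk ℓ s (w + v)) '' closedBall (0:E) γ :=
          (Set.image_eq_range (fun v => empRisk ℓ s (w + v)) (closedBall (0:E) γ)).symm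
        rw [heq]
        apply (isCompact_closedBall (0:E) γ).bddAbove_image
        have hc : Continuous fun v : E => empRisk ℓ s (w + v) := by
          unfold empRisk
          exact continuous_const.mul (continuous_finset_sum Finset.univ fun i _ =>
            (hcont (s i)).comp (continuous_const.add continuous_id))
        exact hc.continuousOn
      have hmem : (j - w : E) ∈ closedBall (0:E) γ := by
        rw [mem_closedBall_zero_iff]
        have hd : dist w j < rad j := mem_ball.1 hjball
        calc ‖j - w‖ = dist j w := (dist_eq_norm j w).symm
          _ = dist w j := dist_comm j w
          _ ≤ γ := le_of_lt (lt_of_lt_of_le hd (hradγ j))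
      calc empRisk ℓ s j = empRisk ℓ s (w + (j - w)) := by rw [add_sub_cancel]
        _ ≤ ⨆ v : closedBall (0:E) γ, empRisk ℓ s (w + ↑v) := le_ciSup hbdd ⟨j - w, hmem⟩
        _ = diamRisk ℓ γ s w := rfl
    have husc_w : trueRisk P ℓ w ≤ trueRisk P ℓ j + ε / 2 :=
      hradusc j w (ball_subset_closedBall hjball)
    have hgap : trueRisk P ℓ j - empRisk ℓ s j < ε / 2 := by rw [← hsum]; exact hgood
    calc trueRisk P ℓ w - diamRisk ℓ γ s w
        ≤ (trueRisk P ℓ j + ε / 2) - empRisk ℓ s j := by linarith [hdiam]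
      _ ≤ ε := by linarith
  refine le_trans ?_ (measure_mono hsubset)
  have hBadBound : μ Bad ≤ ENNReal.ofReal (((T.card:ℝ) + 1) * Real.exp (-β * m)) := by
    calc μ Bad ≤ ∑ j ∈ T, μ {s | ε / 2 ≤ (1 / (m:ℝ)) * ∑ i, (trueRisk P ℓ j - ℓ j (s i))} :=
          measure_biUnion_finset_le T _
      _ ≤ ∑ j ∈ T, ENNReal.ofReal (Real.exp (-βc j * m)) :=
          Finset.sum_le_sum fun j hj => hβcB j (htsub ((hTmem j).1 hj)) m hm
      _ ≤ ∑ j ∈ T, ENNReal.ofReal (Real.exp (-β * m)) := by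
          apply Finset.sum_le_sum
          intro j hj
          apply ENNReal.ofReal_le_ofReal
          apply Real.exp_le_exp.2
          have := hβle j hj
          nlinarith [hm0]
      _ = (T.card : ℝ≥0∞) * ENNReal.ofReal (Real.exp (-β * m)) := by
          rw [Finset.sum_const, nsmul_eq_mul]
      _ ≤ ENNReal.ofReal (((T.card:ℝ) + 1) * Real.exp (-β * m)) := by
          rw [ENNReal.ofReal_mul (add_nonneg (Nat.cast_nonneg _) zero_le_one)]
          apply mul_le_mul_left
          rw [← ENNReal.ofReal_natCast]
          exact ENNReal.ofReal_le_ofReal (by linarith)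
  have hcompl : μ Badᶜ = 1 - μ Bad := prob_compl_eq_one_sub hBadMeas
  rw [hcompl]
  calc ENNReal.ofReal (1 - ((T.card:ℝ) + 1) * Real.exp (-β * m))
      = ENNReal.ofReal 1 - ENNReal.ofReal (((T.card:ℝ) + 1) * Real.exp (-β * m)) :=
        ENNReal.ofReal_sub _ (mul_nonneg (add_nonneg (Nat.cast_nonneg _) zero_le_one)
          (Real.exp_nonneg _))
    _ ≤ 1 - μ Bad := by
        rw [ENNReal.ofReal_one]
        exact tsub_le_tsub_left hBadBound 1
end

section
/- Suppose W ⊆ ℝⁿ is compact, ℓ : ℝⁿ × Z → ℝ is a locally sup-integrable Carathéodory function, and for every w ∈ W the random variable ℓ(w,·) − R(w) is subgaussian. Then for any α ∈ (0,1) and γ > 0, there exists a constant β > 0, independent of m, such that for every m ≥ 1, ℙ^m( sup_{w∈W} { R(w) − R_m^γ(w) } ≤ β m^{−1/2} ) ≥ 1 − α. -/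
open MeasureTheory Metric Set

/-- `X` is subgaussian with variance proxy `σ²` under `P`:
`E[X] = 0` and `E[exp(τX)] ≤ exp(σ²τ²/2)` for all `τ ∈ ℝ`. -/
def IsSubgaussianWith {Z : Type*} [MeasurableSpace Z] (P : Measure Z)
    (X : Z → ℝ) (σ : ℝ) : Prop :=
  (∫ z, X z ∂P = 0) ∧ ∀ τ : ℝ,
    Integrable (fun z => Real.exp (τ * X z)) P ∧
    ∫ z, Real.exp (τ * X z) ∂P ≤ Real.exp (σ ^ 2 * τ ^ 2 / 2)

open Filter Topology
section Aux
variable {E Z : Type*} [NormedAddCommGroup E] [NormedSpace ℝ E] [FiniteDimensional ℝ E]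
  [MeasurableSpace Z] (P : Measure Z) [IsProbabilityMeasure P] (ℓ : E → Z → ℝ)

omit [IsProbabilityMeasure P] in
lemma aux_le_g (hcont : ∀ z, Continuous fun w => ℓ w z) (wbar : E) (ρ : ℝ)
    {w : E} (hw : w ∈ closedBall wbar ρ) (z : Z) :
    ℓ w z ≤ max 0 (⨆ w' : closedBall wbar ρ, ℓ (↑w') z) := by
  refine le_max_of_le_right ?_
  have hbdd : BddAbove (Set.range fun w' : closedBall wbar ρ => ℓ (↑w') z) := by
    rw [show (Set.range fun w' : closedBall wbar ρ => ℓ (↑w') z)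
        = (fun w => ℓ w z) '' (closedBall wbar ρ) from (Set.image_eq_range (fun w => ℓ w z) (closedBall wbar ρ)).symm]
    exact ((isCompact_closedBall wbar ρ).bddAbove_image ((hcont z).continuousOn))
  exact le_ciSup hbdd ⟨w, hw⟩

omit [IsProbabilityMeasure P] in
lemma aux_risk_le (hcont : ∀ z, Continuous fun w => ℓ w z)
    (hint : ∀ w, Integrable (fun z => ℓ w z) P)
    (wbar : E) (ρ : ℝ)
    (hg : Integrable (fun z => max 0 (⨆ w : closedBall wbar ρ, ℓ (↑w) z)) P)
    {w : E} (hw : w ∈ closedBall wbar ρ) :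
    trueRisk P ℓ w ≤ ∫ z, max 0 (⨆ w' : closedBall wbar ρ, ℓ (↑w') z) ∂P :=
  integral_mono (hint w) hg (fun z => aux_le_g ℓ hcont wbar ρ hw z)

omit [IsProbabilityMeasure P] in
lemma aux_exists_max (hcont : ∀ z, Continuous fun w => ℓ w z)
    (hint : ∀ w, Integrable (fun z => ℓ w z) P)
    (hlocsup : ∀ wbar : E, ∃ ρ > (0 : ℝ),
      Integrable (fun z => max 0 (⨆ w : closedBall wbar ρ, ℓ (↑w) z)) P)
    {K : Set E} (hK : IsCompact K) (hne : K.Nonempty) :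
    ∃ p ∈ K, ∀ w ∈ K, trueRisk P ℓ w ≤ trueRisk P ℓ p := by
  classical
  choose ρ hρpos hgint using hlocsup
  -- bounded above on K
  have hbddK : BddAbove (trueRisk P ℓ '' K) := by
    obtain ⟨t, htK, htcov⟩ := hK.elim_nhds_subcover (fun x => ball x (ρ x))
      (fun x _ => ball_mem_nhds x (hρpos x))
    rcases t.eq_empty_or_nonempty with rfl | htne
    · simp only [Finset.notMem_empty, Set.iUnion_of_empty, Set.iUnion_empty] at htcov
      exact absurd (htcov hne.choose_spec) (Set.notMem_empty _)
    · refine ⟨t.sup' htne (fun x => ∫ z, max 0 (⨆ w : closedBall x (ρ x), ℓ (↑w) z) ∂P), ?_⟩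
      rintro y ⟨w, hwK, rfl⟩
      obtain ⟨x, hxt, hwx⟩ := Set.mem_iUnion₂.1 (htcov hwK)
      exact le_trans (aux_risk_le P ℓ hcont hint x (ρ x) (hgint x)
        (ball_subset_closedBall hwx))
        (Finset.le_sup' (fun x => ∫ z, max 0 (⨆ w : closedBall x (ρ x), ℓ (↑w) z) ∂P) hxt)
  set S := sSup (trueRisk P ℓ '' K) with hS
  obtain ⟨u, -, huS, humem⟩ := exists_seq_tendsto_sSup (hne.image _) hbddK
  choose wn hwnK hwnR using humem
  obtain ⟨p, hpK, φ, hφ, hv⟩ := hK.tendsto_subseq hwnK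
  refine ⟨p, hpK, fun w hw => le_trans (le_csSup hbddK (Set.mem_image_of_mem _ hw)) ?_⟩
  -- show S ≤ trueRisk P ℓ p
  set v : ℕ → E := fun n => wn (φ n) with hvdef
  have hRv : Tendsto (fun n => trueRisk P ℓ (v n)) atTop (𝓝 S) := by
    have : (fun n => trueRisk P ℓ (v n)) = u ∘ φ := by
      funext n; exact hwnR (φ n)
    rw [this]
    exact huS.comp hφ.tendsto_atTop
  have hev : ∀ᶠ n in atTop, v n ∈ closedBall p (ρ p) :=
    hv.eventually_mem (closedBall_mem_nhds p (hρpos p))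
  set g : Z → ℝ := fun z => max 0 (⨆ w : closedBall p (ρ p), ℓ (↑w) z) with hgdef
  set F : ℕ → Z → ℝ := fun n z => g z - ℓ (v n) z with hFdef
  have hFint : ∀ n, Integrable (F n) P := fun n => (hgint p).sub (hint (v n))
  have hFI : ∀ n, ∫ z, F n z ∂P = (∫ z, g z ∂P) - trueRisk P ℓ (v n) := fun n =>
    integral_sub (hgint p) (hint (v n))
  have hgp : ∀ z, 0 ≤ g z - ℓ p z := fun z =>
    sub_nonneg.2 (aux_le_g ℓ hcont p (ρ p) (mem_closedBall_self (hρpos p).le) z)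
  have hSg : S ≤ ∫ z, g z ∂P := by
    refine le_of_tendsto hRv ?_
    filter_upwards [hev] with n hn
    exact aux_risk_le P ℓ hcont hint p (ρ p) (hgint p) hn
  -- Fatou
  have key : ENNReal.ofReal ((∫ z, g z ∂P) - trueRisk P ℓ p)
      ≤ ENNReal.ofReal ((∫ z, g z ∂P) - S) := by
    have h1 : (∫⁻ z, ENNReal.ofReal (g z - ℓ p z) ∂P)
        = ∫⁻ z, liminf (fun n => ENNReal.ofReal (F n z)) atTop ∂P := by
      refine lintegral_congr fun z => ?_
      have hlim : Tendsto (fun n => ENNReal.ofReal (F n z)) atTop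
          (𝓝 (ENNReal.ofReal (g z - ℓ p z))) := by
        refine (ENNReal.continuous_ofReal.tendsto _).comp ?_
        exact tendsto_const_nhds.sub (((hcont z).tendsto p).comp hv)
      exact hlim.liminf_eq.symm
    have h2 : (∫⁻ z, liminf (fun n => ENNReal.ofReal (F n z)) atTop ∂P)
        ≤ liminf (fun n => ∫⁻ z, ENNReal.ofReal (F n z) ∂P) atTop :=
      lintegral_liminf_le' (fun n =>
        ENNReal.measurable_ofReal.comp_aemeasurable (hFint n).aemeasurable)
    have h3 : liminf (fun n => ∫⁻ z, ENNReal.ofReal (F n z) ∂P) atTop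
        ≤ liminf (fun n => ENNReal.ofReal ((∫ z, g z ∂P) - trueRisk P ℓ (v n))) atTop := by
      refine liminf_le_liminf ?_
      filter_upwards [hev] with n hn
      have hnn : 0 ≤ᵐ[P] F n := ae_of_all _ fun z =>
        sub_nonneg.2 (aux_le_g ℓ hcont p (ρ p) hn z)
      rw [← ofReal_integral_eq_lintegral_ofReal (hFint n) hnn, hFI n]
    have h4 : liminf (fun n => ENNReal.ofReal ((∫ z, g z ∂P) - trueRisk P ℓ (v n))) atTop
        = ENNReal.ofReal ((∫ z, g z ∂P) - S) := by
      refine Tendsto.liminf_eq ?_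
      exact (ENNReal.continuous_ofReal.tendsto _).comp (tendsto_const_nhds.sub hRv)
    have h0 : ENNReal.ofReal ((∫ z, g z ∂P) - trueRisk P ℓ p)
        = ∫⁻ z, ENNReal.ofReal (g z - ℓ p z) ∂P := by
      have h0' := ofReal_integral_eq_lintegral_ofReal ((hgint p).sub (hint p)) (ae_of_all _ hgp)
      simp only [Pi.sub_apply] at h0'
      rw [integral_sub (hgint p) (hint p)] at h0'
      exact h0'
    calc ENNReal.ofReal ((∫ z, g z ∂P) - trueRisk P ℓ p)
        = ∫⁻ z, ENNReal.ofReal (g z - ℓ p z) ∂P := h0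
      _ ≤ liminf (fun n => ∫⁻ z, ENNReal.ofReal (F n z) ∂P) atTop := h1 ▸ h2
      _ ≤ _ := h3
      _ = _ := h4
  have := (ENNReal.ofReal_le_ofReal_iff (sub_nonneg.2 hSg)).1 key
  linarith
end Aux

lemma aux_chernoff {Z : Type*} [MeasurableSpace Z] (P : Measure Z) [IsProbabilityMeasure P]
    (X : Z → ℝ) (σ : ℝ) (hσ : 0 < σ)
    (hmgf : ∀ τ : ℝ, Integrable (fun z => Real.exp (τ * X z)) P ∧
      (∫ z, Real.exp (τ * X z) ∂P) ≤ Real.exp (σ ^ 2 * τ ^ 2 / 2))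
    (m : ℕ) (hm : 1 ≤ m) (t : ℝ) (ht : 0 < t) :
    Measure.pi (fun _ : Fin m => P) {s | t ≤ (1 / (m : ℝ)) * ∑ i, X (s i)} ≤
      ENNReal.ofReal (Real.exp (-(m * t ^ 2) / (2 * σ ^ 2))) := by
  letI : MeasureSpace Z := ⟨P⟩
  haveI : SigmaFinite (volume : Measure Z) := by
    show SigmaFinite P; infer_instance
  have hmpos : (0 : ℝ) < m := by exact_mod_cast Nat.lt_of_lt_of_le Nat.zero_lt_one hm
  have hvol : Measure.pi (fun _ : Fin m => P) = (volume : Measure (Fin m → Z)) :=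
    (volume_pi).symm
  set τ : ℝ := t / σ ^ 2 with hτdef
  have hτpos : 0 < τ := div_pos ht (by positivity)
  set f : (Fin m → Z) → ℝ := fun s => ∏ i, Real.exp (τ * X (s i)) with hfdef
  have hf_int : Integrable f (volume : Measure (Fin m → Z)) :=
    Integrable.fintype_prod (f := fun _ : Fin m => fun z => Real.exp (τ * X z))
      (fun i => (hmgf τ).1)
  have hf_nonneg : ∀ s, 0 ≤ f s := fun s => Finset.prod_nonneg fun i _ => (Real.exp_pos _).le
  set ε : ℝ := Real.exp (τ * (m * t)) with hεdef
  have hεpos : 0 < ε := Real.exp_pos _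
  have hsub : {s : Fin m → Z | t ≤ (1 / (m : ℝ)) * ∑ i, X (s i)} ⊆ {s | ε ≤ f s} := by
    intro s hs
    simp only [Set.mem_setOf_eq] at hs ⊢
    have hsum : m * t ≤ ∑ i, X (s i) := by
      rw [one_div] at hs
      have := (le_inv_mul_iff₀ hmpos).1 hs
      linarith [this]
    have : f s = Real.exp (τ * ∑ i, X (s i)) := by
      rw [Finset.mul_sum, Real.exp_sum]
    rw [this]
    exact Real.exp_le_exp.2 (mul_le_mul_of_nonneg_left hsum hτpos.le)
  have hmarkov := mul_meas_ge_le_integral_of_nonneg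
    (ae_of_all _ hf_nonneg) hf_int ε
  have hIf : (∫ s, f s) = (∫ z, Real.exp (τ * X z) ∂P) ^ m := by
    have := MeasureTheory.integral_fintype_prod_eq_pow (𝕜 := ℝ) (ι := Fin m) (μ := (volume : Measure Z))
      (fun z => Real.exp (τ * X z))
    simp only [Fintype.card_fin] at this
    exact this
  have hIbound : (∫ s, f s) ≤ Real.exp (σ ^ 2 * τ ^ 2 / 2) ^ m := by
    rw [hIf]
    exact pow_le_pow_left₀ (integral_nonneg fun z => (Real.exp_pos _).le) (hmgf τ).2 m
  -- conclude
  have h1 : ((volume : Measure (Fin m → Z)) {s | ε ≤ f s}).toReal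
      ≤ Real.exp (σ ^ 2 * τ ^ 2 / 2) ^ m / ε := by
    rw [le_div_iff₀ hεpos]
    calc ((volume : Measure (Fin m → Z)) {s | ε ≤ f s}).toReal * ε
        = ε * ((volume : Measure (Fin m → Z)) {s | ε ≤ f s}).toReal := mul_comm _ _
      _ ≤ ∫ s, f s := hmarkov
      _ ≤ _ := hIbound
  have hexp : Real.exp (σ ^ 2 * τ ^ 2 / 2) ^ m / ε = Real.exp (-(m * t ^ 2) / (2 * σ ^ 2)) := by
    rw [← Real.exp_nat_mul, hεdef, ← Real.exp_sub]
    congr 1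
    have hσ2 : (σ : ℝ) ^ 2 ≠ 0 := by positivity
    rw [hτdef]
    field_simp
    ring
  rw [hvol]
  calc (volume : Measure (Fin m → Z)) {s : Fin m → Z | t ≤ (1 / (m : ℝ)) * ∑ i, X (s i)}
      ≤ (volume : Measure (Fin m → Z)) {s | ε ≤ f s} := measure_mono hsub
    _ = ENNReal.ofReal (((volume : Measure (Fin m → Z)) {s | ε ≤ f s}).toReal) := by
        haveI : IsProbabilityMeasure (volume : Measure (Fin m → Z)) := by
          rw [← hvol]; infer_instance
        exact (ENNReal.ofReal_toReal (measure_ne_top _ _)).symm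
    _ ≤ ENNReal.ofReal (Real.exp (-(m * t ^ 2) / (2 * σ ^ 2))) := by
        exact ENNReal.ofReal_le_ofReal (hexp ▸ h1)

set_option maxHeartbeats 1000000 in
/-- **rate of convergence in DRM.** Suppose `W ⊆ ℝⁿ` is compact, `ℓ` is a
locally sup-integrable Carathéodory function, and for every `w ∈ W` the random variable
`ℓ(w,·) − R(w)` is subgaussian. Then for any `α ∈ (0,1)` and `γ > 0`, there exists
`β > 0` (independent of `m`) such that for every `m ≥ 1`,
`ℙ^m( sup_{w∈W} { R(w) − R_m^γ(w) } ≤ β m^{−1/2} ) ≥ 1 − α`. -/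
theorem drm_rate_of_convergence
    {E Z : Type*} [NormedAddCommGroup E] [NormedSpace ℝ E] [FiniteDimensional ℝ E]
    [MeasurableSpace Z] (P : Measure Z) [IsProbabilityMeasure P]
    (W : Set E) (hW : IsCompact W)
    (ℓ : E → Z → ℝ)
    (hcont : ∀ z, Continuous fun w => ℓ w z)
    (hmeas : ∀ w, Measurable fun z => ℓ w z)
    (hint : ∀ w, Integrable (fun z => ℓ w z) P)
    (hlocsup : ∀ wbar : E, ∃ ρ > (0 : ℝ),
      Integrable (fun z => max 0 (⨆ w : closedBall wbar ρ, ℓ (↑w) z)) P)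
    (hsg : ∀ w ∈ W, ∃ σ : ℝ,
      IsSubgaussianWith P (fun z => ℓ w z - trueRisk P ℓ w) σ)
    (α γ : ℝ) (hα : α ∈ Set.Ioo (0 : ℝ) 1) (hγ : 0 < γ) :
    ∃ β > (0 : ℝ), ∀ m : ℕ, 1 ≤ m →
      ENNReal.ofReal (1 - α) ≤
        Measure.pi (fun _ : Fin m => P)
          {s | ∀ w ∈ W, trueRisk P ℓ w - diamRisk ℓ γ s w ≤ β / Real.sqrt m} := by
  classical
  obtain ⟨hα0, hα1⟩ := hα
  by_cases hWne : W.Nonempty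
  swap
  · refine ⟨1, one_pos, fun m hm => ?_⟩
    have huniv : {s : Fin m → Z | ∀ w ∈ W,
        trueRisk P ℓ w - diamRisk ℓ γ s w ≤ 1 / Real.sqrt m} = Set.univ := by
      ext s
      simp only [Set.mem_setOf_eq, Set.mem_univ, iff_true]
      intro w hw
      exact absurd ⟨w, hw⟩ hWne
    rw [huniv, measure_univ]
    exact ENNReal.ofReal_le_one.2 (by linarith)
  -- covering
  obtain ⟨t, htW, htcov⟩ := hW.elim_nhds_subcover (fun x => ball x (γ / 2))
    (fun x _ => ball_mem_nhds x (by linarith))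
  have htne : t.Nonempty := by
    rcases t.eq_empty_or_nonempty with rfl | h
    · obtain ⟨w, hw⟩ := hWne
      simpa using htcov hw
    · exact h
  set k : ℕ := t.card with hk
  have hk1 : 1 ≤ k := Finset.card_pos.2 htne
  have hkR : (1 : ℝ) ≤ k := by exact_mod_cast hk1
  -- maximizers
  have hmax : ∀ c ∈ t, ∃ p ∈ W ∩ closedBall c (γ / 2), ∀ w ∈ W ∩ closedBall c (γ / 2),
      trueRisk P ℓ w ≤ trueRisk P ℓ p := fun c hc =>
    aux_exists_max P ℓ hcont hint hlocsup (hW.inter_right isClosed_closedBall)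
      ⟨c, htW c hc, mem_closedBall_self (by linarith)⟩
  choose! p hpmem hpmax using hmax
  have hsg' : ∀ c ∈ t, ∃ σ0 : ℝ,
      IsSubgaussianWith P (fun z => ℓ (p c) z - trueRisk P ℓ (p c)) σ0 :=
    fun c hc => hsg (p c) (hpmem c hc).1
  choose! σ hσ using hsg'
  set σ' : E → ℝ := fun c => max |σ c| 1 with hσ'def
  have hσ'pos : ∀ c, 0 < σ' c := fun c => lt_of_lt_of_le one_pos (le_max_right _ _)
  set σm : ℝ := t.sup' htne σ' with hσm
  have hσmge : ∀ c ∈ t, σ' c ≤ σm := fun c hc => Finset.le_sup' σ' hc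
  have hσmpos : 0 < σm :=
    lt_of_lt_of_le (hσ'pos htne.choose) (hσmge _ htne.choose_spec)
  have hlogpos : 0 < Real.log ((k : ℝ) / α) :=
    Real.log_pos (by rw [lt_div_iff₀ hα0]; nlinarith)
  set β : ℝ := σm * Real.sqrt (2 * Real.log ((k : ℝ) / α)) with hβ
  have hβpos : 0 < β := mul_pos hσmpos (Real.sqrt_pos.2 (by linarith))
  refine ⟨β, hβpos, fun m hm => ?_⟩
  have hmpos : (0 : ℝ) < m := by exact_mod_cast Nat.lt_of_lt_of_le Nat.zero_lt_one hm
  have hsqm : 0 < Real.sqrt m := Real.sqrt_pos.2 hmpos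
  set b : ℝ := β / Real.sqrt m with hb
  have hbpos : 0 < b := div_pos hβpos hsqm
  set μ := Measure.pi (fun _ : Fin m => P) with hμ
  haveI : IsProbabilityMeasure μ := by rw [hμ]; infer_instance
  have hemeas : ∀ q : E, Measurable fun s : Fin m → Z => empRisk ℓ s q := fun q =>
    measurable_const.mul (Finset.measurable_sum _ fun i _ =>
      (hmeas q).comp (measurable_pi_apply i))
  set G : Set (Fin m → Z) :=
    ⋂ c ∈ t, {s | trueRisk P ℓ (p c) - empRisk ℓ s (p c) ≤ b} with hG
  have hGm : MeasurableSet G := by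
    refine MeasurableSet.biInter t.countable_toSet fun c hc => ?_
    exact measurableSet_le (measurable_const.sub (hemeas (p c))) measurable_const
  -- per point bound
  have hpoint : ∀ c ∈ t,
      μ {s | trueRisk P ℓ (p c) - empRisk ℓ s (p c) ≤ b}ᶜ ≤ ENNReal.ofReal (α / k) := by
    intro c hc
    set q := p c with hq
    set X : Z → ℝ := fun z => trueRisk P ℓ q - ℓ q z with hX
    have hmgf : ∀ τ : ℝ, Integrable (fun z => Real.exp (τ * X z)) P ∧
        (∫ z, Real.exp (τ * X z) ∂P) ≤ Real.exp ((σ' c) ^ 2 * τ ^ 2 / 2) := by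
      intro τ
      have h := (hσ c hc).2 (-τ)
      have heq : (fun z => Real.exp (τ * X z))
          = fun z => Real.exp ((-τ) * (ℓ q z - trueRisk P ℓ q)) := by
        funext z; congr 1; simp only [hX]; ring
      have hσsq : σ c ^ 2 ≤ σ' c ^ 2 := by
        have h1 : |σ c| ≤ σ' c := le_max_left _ _
        nlinarith [abs_nonneg (σ c), sq_abs (σ c)]
      constructor
      · rw [heq]; exact h.1
      · rw [heq]
        refine le_trans h.2 (Real.exp_le_exp.2 ?_)
        have hτ2 : (-τ) ^ 2 = τ ^ 2 := by ring
        rw [hτ2]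
        nlinarith [sq_nonneg τ]
    have hcher := aux_chernoff P X (σ' c) (hσ'pos c) hmgf m hm b hbpos
    have hsub : {s : Fin m → Z | trueRisk P ℓ q - empRisk ℓ s q ≤ b}ᶜ ⊆
        {s | b ≤ (1 / (m : ℝ)) * ∑ i, X (s i)} := by
      intro s hs
      simp only [Set.mem_compl_iff, Set.mem_setOf_eq, not_le] at hs
      simp only [Set.mem_setOf_eq]
      have heq2 : (1 / (m : ℝ)) * ∑ i, X (s i) = trueRisk P ℓ q - empRisk ℓ s q := by
        simp only [hX, empRisk, Finset.sum_sub_distrib, Finset.sum_const,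
          Finset.card_univ, Fintype.card_fin, nsmul_eq_mul]
        field_simp
      rw [heq2]
      exact hs.le
    refine le_trans (measure_mono hsub) (le_trans hcher ?_)
    refine ENNReal.ofReal_le_ofReal ?_
    have hb2 : (m : ℝ) * b ^ 2 = β ^ 2 := by
      rw [hb, div_pow, Real.sq_sqrt hmpos.le]
      field_simp
    rw [hb2]
    have hαk : 0 < α / (k : ℝ) := div_pos hα0 (by linarith)
    rw [← Real.le_log_iff_exp_le hαk]
    have hlogeq : Real.log (α / (k : ℝ)) = -Real.log ((k : ℝ) / α) := by
      rw [← Real.log_inv]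
      congr 1
      field_simp
    rw [hlogeq, neg_div, neg_le_neg_iff]
    have hβ2 : β ^ 2 = σm ^ 2 * (2 * Real.log ((k : ℝ) / α)) := by
      rw [hβ, mul_pow, Real.sq_sqrt (by linarith)]
    have hσ'le : σ' c ^ 2 ≤ σm ^ 2 := pow_le_pow_left₀ (hσ'pos c).le (hσmge c hc) 2
    rw [le_div_iff₀ (by positivity)]
    rw [hβ2]
    nlinarith [hlogpos.le, (hσ'pos c), sq_nonneg (σ' c)]
  -- union bound
  have hcompl : μ Gᶜ ≤ ENNReal.ofReal α := by
    have hGc : Gᶜ = ⋃ c ∈ t, {s | trueRisk P ℓ (p c) - empRisk ℓ s (p c) ≤ b}ᶜ := by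
      simp only [hG, Set.compl_iInter]
    rw [hGc]
    refine le_trans (measure_biUnion_finset_le t _) ?_
    refine le_trans (Finset.sum_le_sum fun c hc => hpoint c hc) ?_
    rw [Finset.sum_const, nsmul_eq_mul]
    have hcc : (t.card : ENNReal) = ENNReal.ofReal (k : ℝ) := by
      rw [ENNReal.ofReal_natCast]
    rw [hcc, ← ENNReal.ofReal_mul (by positivity)]
    refine ENNReal.ofReal_le_ofReal ?_
    have hkne : (k : ℝ) ≠ 0 := by linarith
    rw [mul_div_cancel₀ _ hkne]
  have hGμ : ENNReal.ofReal (1 - α) ≤ μ G := by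
    have h1 : μ Gᶜᶜ = 1 - μ Gᶜ := prob_compl_eq_one_sub hGm.compl
    rw [compl_compl] at h1
    rw [h1]
    have h2 : ENNReal.ofReal (1 - α) + ENNReal.ofReal α = 1 := by
      rw [← ENNReal.ofReal_add (by linarith) hα0.le]
      norm_num
    calc ENNReal.ofReal (1 - α) = 1 - ENNReal.ofReal α := by
          rw [← h2, ENNReal.add_sub_cancel_right ENNReal.ofReal_ne_top]
      _ ≤ 1 - μ Gᶜ := tsub_le_tsub_left hcompl 1
  refine le_trans hGμ (measure_mono ?_)
  intro s hs
  simp only [Set.mem_setOf_eq]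
  intro w hw
  obtain ⟨c, hct, hwc⟩ := Set.mem_iUnion₂.1 (htcov hw)
  have hwc' : w ∈ closedBall c (γ / 2) := ball_subset_closedBall hwc
  have hRw : trueRisk P ℓ w ≤ trueRisk P ℓ (p c) := hpmax c hct w ⟨hw, hwc'⟩
  have hdist : ‖p c - w‖ ≤ γ := by
    have h1 : dist (p c) c ≤ γ / 2 := mem_closedBall.1 (hpmem c hct).2
    have h2 : dist w c < γ / 2 := mem_ball.1 hwc
    rw [← dist_eq_norm]
    calc dist (p c) w ≤ dist (p c) c + dist c w := dist_triangle _ _ _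
      _ ≤ γ / 2 + γ / 2 := by rw [dist_comm c w]; linarith
      _ = γ := by ring
  have hce : Continuous fun w' : E => empRisk ℓ s w' :=
    continuous_const.mul (continuous_finset_sum _ fun i _ => hcont (s i))
  have hbdd : BddAbove (Set.range fun v : closedBall (0 : E) γ => empRisk ℓ s (w + ↑v)) := by
    refine BddAbove.mono ?_ ((isCompact_closedBall w γ).bddAbove_image hce.continuousOn)
    rintro y ⟨v, rfl⟩
    refine ⟨w + ↑v, ?_, rfl⟩
    rw [mem_closedBall, dist_self_add_left]
    exact mem_closedBall_zero_iff.1 v.2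
  have hsup : empRisk ℓ s (p c) ≤ diamRisk ℓ γ s w := by
    have hv : (p c - w) ∈ closedBall (0 : E) γ := mem_closedBall_zero_iff.2 hdist
    have h := le_ciSup hbdd ⟨p c - w, hv⟩
    simpa [add_sub_cancel, diamRisk] using h
  have hG_c : trueRisk P ℓ (p c) - empRisk ℓ s (p c) ≤ b := Set.mem_iInter₂.1 hs c hct
  calc trueRisk P ℓ w - diamRisk ℓ γ s w
      ≤ trueRisk P ℓ (p c) - empRisk ℓ s (p c) := sub_le_sub hRw hsup
    _ ≤ b := hG_c
end

section
/- Suppose W ⊆ ℝⁿ is compact, ℓ : ℝⁿ × Z → ℝ is a locally inf-integrable Carathéodory function, and for every w ∈ W the random variable ℓ(w,·) − R(w) is subgaussian. Then for any α ∈ (0,1), γ > 0, δ ∈ ℝ, there exists β > 0, independent of m, such that for every m ≥ 1, with ℙ^m-probability at least 1 − α: exs( {w ∈ W : R(w) ≤ δ} ; {w ∈ W : R_m(w) ≤ δ + β m^{−1/2}} ) ≤ γ. -/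
open MeasureTheory Metric Set

/-- The excess `exs(A;B) = sup_{w∈A} inf_{w'∈B} ‖w−w'‖`, valued in `ℝ≥0∞`; by the usual
`ℝ≥0∞`-conventions this is `0` if `A = ∅` and `∞` if `A ≠ ∅`, `B = ∅`. -/
noncomputable def exs {E : Type*} [NormedAddCommGroup E] (A B : Set E) : ENNReal :=
  ⨆ w ∈ A, ⨅ w' ∈ B, edist w w'

lemma chernoff_bound {Z : Type*} [MeasurableSpace Z] (P : Measure Z) [IsProbabilityMeasure P]
    (X : Z → ℝ) (hX : Measurable X) (σ : ℝ) (hσ : 1 ≤ σ)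
    (hsg : ∀ τ : ℝ, Integrable (fun z => Real.exp (τ * X z)) P ∧
      ∫ z, Real.exp (τ * X z) ∂P ≤ Real.exp (σ ^ 2 * τ ^ 2 / 2))
    (β : ℝ) (hβ : 0 < β) (m : ℕ) (hm : 1 ≤ m) :
    (Measure.pi fun _ : Fin m => P) {s | β * Real.sqrt m ≤ ∑ i, X (s i)} ≤
      ENNReal.ofReal (Real.exp (-(β ^ 2) / (2 * σ ^ 2))) := by
  letI : MeasureSpace Z := ⟨P⟩
  have hσ0 : (0:ℝ) < σ := lt_of_lt_of_le one_pos hσ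
  have hm0 : (0:ℝ) < (m:ℝ) := by exact_mod_cast Nat.pos_of_ne_zero (by omega)
  set r : ℝ := Real.sqrt m with hr
  have hr0 : 0 < r := Real.sqrt_pos.2 hm0
  have hr2 : r ^ 2 = (m:ℝ) := Real.sq_sqrt hm0.le
  set τ : ℝ := β / (σ ^ 2 * r) with hτdef
  have hτ : 0 < τ := by positivity
  set f : (Fin m → Z) → ℝ := fun s => Real.exp (τ * ∑ i, X (s i)) with hf
  have hfprod : ∀ s, f s = ∏ i, Real.exp (τ * X (s i)) := by
    intro s
    simp only [hf]
    rw [Finset.mul_sum, Real.exp_sum]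
  have hfint : Integrable f (Measure.pi fun _ : Fin m => P) := by
    have : Integrable (fun s : Fin m → Z => ∏ i, Real.exp (τ * X (s i))) volume :=
      Integrable.fintype_prod (f := fun _ : Fin m => fun z => Real.exp (τ * X z))
        (fun i => (hsg τ).1)
    exact (integrable_congr (Filter.Eventually.of_forall fun s => (hfprod s).symm)).mp this
  have hfmeas : Measurable f := by
    apply Real.measurable_exp.comp
    apply Measurable.const_mul
    exact Finset.measurable_sum _ fun i _ => hX.comp (measurable_pi_apply i)
  have hfnn : ∀ s, 0 ≤ f s := fun s => (Real.exp_pos _).le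
  -- integral bound
  have hintval : ∫ s, f s ∂(Measure.pi fun _ : Fin m => P) ≤ Real.exp ((m:ℝ) * (σ ^ 2 * τ ^ 2 / 2)) := by
    have h1 : ∫ s, f s ∂(Measure.pi fun _ : Fin m => P)
        = (∫ z, Real.exp (τ * X z) ∂P) ^ m := by
      have := integral_fintype_prod_eq_pow (𝕜 := ℝ) (ι := Fin m) (fun z => Real.exp (τ * X z)) (μ := P)
      simp only [Fintype.card_fin] at this
      calc ∫ s, f s ∂(Measure.pi fun _ : Fin m => P)
          = ∫ s : Fin m → Z, ∏ i, Real.exp (τ * X (s i)) := by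
            exact integral_congr_ae (Filter.Eventually.of_forall fun s => hfprod s)
        _ = (∫ z, Real.exp (τ * X z) ∂P) ^ m := this
    rw [h1]
    calc (∫ z, Real.exp (τ * X z) ∂P) ^ m
        ≤ (Real.exp (σ ^ 2 * τ ^ 2 / 2)) ^ m :=
          pow_le_pow_left₀ (integral_nonneg fun z => (Real.exp_pos _).le) (hsg τ).2 m
      _ = Real.exp ((m:ℝ) * (σ ^ 2 * τ ^ 2 / 2)) := by
          rw [← Real.exp_nat_mul]
  -- exponent algebra
  have hexp : (m:ℝ) * (σ ^ 2 * τ ^ 2 / 2) = τ * (β * r) + (-(β ^ 2) / (2 * σ ^ 2)) := by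
    rw [hτdef, ← hr2]
    have hrne : r ≠ 0 := hr0.ne'
    have hσne : σ ≠ 0 := hσ0.ne'
    field_simp
    ring
  set ε : ENNReal := ENNReal.ofReal (Real.exp (τ * (β * r))) with hε
  have hε0 : ε ≠ 0 := by simp [hε, Real.exp_pos]
  have hεtop : ε ≠ ⊤ := ENNReal.ofReal_ne_top
  have hsubset : {s : Fin m → Z | β * r ≤ ∑ i, X (s i)} ⊆
      {s | ε ≤ ENNReal.ofReal (f s)} := by
    intro s hs
    simp only [mem_setOf_eq] at hs ⊢
    apply ENNReal.ofReal_le_ofReal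
    exact Real.exp_le_exp.2 (mul_le_mul_of_nonneg_left hs hτ.le)
  have hmarkov : ε * (Measure.pi fun _ : Fin m => P) {s | β * r ≤ ∑ i, X (s i)} ≤
      ∫⁻ s, ENNReal.ofReal (f s) ∂(Measure.pi fun _ : Fin m => P) := by
    calc ε * (Measure.pi fun _ : Fin m => P) {s | β * r ≤ ∑ i, X (s i)}
        ≤ ε * (Measure.pi fun _ : Fin m => P) {s | ε ≤ ENNReal.ofReal (f s)} := by
          exact mul_le_mul_right (measure_mono hsubset) ε
      _ ≤ _ := mul_meas_ge_le_lintegral₀ (ENNReal.measurable_ofReal.comp hfmeas).aemeasurable ε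
  have hlint : ∫⁻ s, ENNReal.ofReal (f s) ∂(Measure.pi fun _ : Fin m => P)
      = ENNReal.ofReal (∫ s, f s ∂(Measure.pi fun _ : Fin m => P)) :=
    (ofReal_integral_eq_lintegral_ofReal hfint
      (Filter.Eventually.of_forall hfnn)).symm
  have hfinal : ε * (Measure.pi fun _ : Fin m => P) {s | β * r ≤ ∑ i, X (s i)} ≤
      ε * ENNReal.ofReal (Real.exp (-(β ^ 2) / (2 * σ ^ 2))) := by
    calc ε * (Measure.pi fun _ : Fin m => P) {s | β * r ≤ ∑ i, X (s i)}
        ≤ ∫⁻ s, ENNReal.ofReal (f s) ∂(Measure.pi fun _ : Fin m => P) := hmarkov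
      _ = ENNReal.ofReal (∫ s, f s ∂(Measure.pi fun _ : Fin m => P)) := hlint
      _ ≤ ENNReal.ofReal (Real.exp ((m:ℝ) * (σ ^ 2 * τ ^ 2 / 2))) :=
          ENNReal.ofReal_le_ofReal hintval
      _ = ε * ENNReal.ofReal (Real.exp (-(β ^ 2) / (2 * σ ^ 2))) := by
          rw [hexp, Real.exp_add, hε, ← ENNReal.ofReal_mul (Real.exp_pos _).le]
  exact (ENNReal.mul_le_mul_iff_right hε0 hεtop).mp hfinal

set_option maxHeartbeats 1000000 in
/-- **confidence region in DRM, level sets.** Suppose `W ⊆ ℝⁿ` is compact,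
`ℓ` is a locally inf-integrable Carathéodory function, and for every `w ∈ W` the random
variable `ℓ(w,·) − R(w)` is subgaussian. Then for any `α ∈ (0,1)`, `γ > 0`, `δ ∈ ℝ`,
there exists `β > 0` (independent of `m`) such that for every `m ≥ 1`, with
`ℙ^m`-probability at least `1 − α`:
`exs( {w ∈ W : R(w) ≤ δ} ; {w ∈ W : R_m(w) ≤ δ + β m^{−1/2}} ) ≤ γ`. -/
theorem drm_confidence_region_level_sets
    {E Z : Type*} [NormedAddCommGroup E] [NormedSpace ℝ E] [FiniteDimensional ℝ E]
    [MeasurableSpace Z] (P : Measure Z) [IsProbabilityMeasure P]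
    (W : Set E) (hW : IsCompact W)
    (ℓ : E → Z → ℝ)
    (hcont : ∀ z, Continuous fun w => ℓ w z)
    (hmeas : ∀ w, Measurable fun z => ℓ w z)
    (hint : ∀ w, Integrable (fun z => ℓ w z) P)
    (hlocinf : ∀ wbar : E, ∃ ρ > (0 : ℝ),
      Integrable (fun z => min 0 (⨅ w : closedBall wbar ρ, ℓ (↑w) z)) P)
    (hsg : ∀ w ∈ W, ∃ σ : ℝ,
      IsSubgaussianWith P (fun z => ℓ w z - trueRisk P ℓ w) σ)
    (α γ δ : ℝ) (hα : α ∈ Set.Ioo (0 : ℝ) 1) (hγ : 0 < γ) :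
    ∃ β > (0 : ℝ), ∀ m : ℕ, 1 ≤ m →
      ENNReal.ofReal (1 - α) ≤
        Measure.pi (fun _ : Fin m => P)
          {s | exs {w ∈ W | trueRisk P ℓ w ≤ δ}
                 {w ∈ W | empRisk ℓ s w ≤ δ + β / Real.sqrt m} ≤ ENNReal.ofReal γ} := by
  classical
  obtain ⟨hα0, hα1⟩ := hα
  set R := trueRisk P ℓ with hR
  set A := {w ∈ W | R w ≤ δ} with hAdef
  have hAW : A ⊆ W := sep_subset _ _
  have htb : TotallyBounded A := hW.totallyBounded.subset hAW
  obtain ⟨t, htA, htfin, hcov⟩ := (EMetric.totallyBounded_iff'.1 htb) (ENNReal.ofReal γ)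
    (by simp [hγ])
  have hσsel : ∀ y : E, ∃ σ : ℝ, y ∈ t → IsSubgaussianWith P (fun z => ℓ y z - R y) σ := by
    intro y
    by_cases hy : y ∈ t
    · obtain ⟨σ, hσ⟩ := hsg y (hAW (htA hy)); exact ⟨σ, fun _ => hσ⟩
    · exact ⟨0, fun h => absurd h hy⟩
  choose σfun hσfun using hσsel
  clear_value R
  set T : Finset E := htfin.toFinset with hT
  have hmemT : ∀ y, y ∈ T ↔ y ∈ t := fun y => htfin.mem_toFinset
  set σ' : ℝ := 1 + ∑ y ∈ T, |σfun y| with hσ'def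
  have hσ'1 : 1 ≤ σ' := le_add_of_nonneg_right (Finset.sum_nonneg fun y _ => abs_nonneg _)
  have hσ'0 : (0:ℝ) < σ' := lt_of_lt_of_le one_pos hσ'1
  clear_value σ'
  have hsg' : ∀ y ∈ t, ∀ τ : ℝ,
      Integrable (fun z => Real.exp (τ * (ℓ y z - R y))) P ∧
      ∫ z, Real.exp (τ * (ℓ y z - R y)) ∂P ≤ Real.exp (σ' ^ 2 * τ ^ 2 / 2) := by
    intro y hy τ
    obtain ⟨-, h2⟩ := hσfun y hy
    refine ⟨(h2 τ).1, le_trans (h2 τ).2 ?_⟩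
    apply Real.exp_le_exp.2
    have h1 : |σfun y| ≤ σ' := by
      have := Finset.single_le_sum (f := fun y => |σfun y|)
        (fun y _ => abs_nonneg _) ((hmemT y).2 hy)
      rw [hσ'def]
      linarith
    have h3 : (σfun y)^2 ≤ σ'^2 := by
      rw [← sq_abs]
      exact pow_le_pow_left₀ (abs_nonneg _) h1 2
    have h6 := mul_le_mul_of_nonneg_right h3 (sq_nonneg τ)
    linarith
  set k : ℕ := T.card with hk
  set L : ℝ := Real.log ((k:ℝ) / α) with hL
  set β : ℝ := σ' * Real.sqrt (2 * max L 0 + 1) with hβdef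
  have hsqpos : (0:ℝ) < 2 * max L 0 + 1 := by positivity
  have hsq : Real.sqrt (2 * max L 0 + 1) ^ 2 = 2 * max L 0 + 1 := Real.sq_sqrt hsqpos.le
  have hβ0 : 0 < β := mul_pos hσ'0 (Real.sqrt_pos.2 hsqpos)
  clear_value k L β
  have hkey : (k:ℝ) * Real.exp (-(β^2) / (2 * σ'^2)) ≤ α := by
    rcases Nat.eq_zero_or_pos k with h0 | hkpos
    · rw [h0]; simp; positivity
    · have hk0 : (0:ℝ) < (k:ℝ) := by exact_mod_cast hkpos
      have hLle : -(β^2)/(2*σ'^2) ≤ -L := by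
        have hβ2 : β^2 = σ'^2 * (2 * max L 0 + 1) := by rw [hβdef, mul_pow, hsq]
        rw [hβ2]
        have hdiv : σ'^2 * (2 * max L 0 + 1) / (2*σ'^2) = (2 * max L 0 + 1)/2 := by
          field_simp
        rw [neg_div, hdiv]
        have := le_max_left L 0
        linarith
      have hexpL : Real.exp (-L) = α / k := by
        rw [Real.exp_neg, hL, Real.exp_log (by positivity), inv_div]
      have h4 : Real.exp (-(β^2)/(2*σ'^2)) ≤ α / k := by
        rw [← hexpL]; exact Real.exp_le_exp.2 hLle
      calc (k:ℝ) * Real.exp (-(β^2)/(2*σ'^2)) ≤ (k:ℝ) * (α/k) :=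
            mul_le_mul_of_nonneg_left h4 hk0.le
        _ = α := by rw [mul_comm, div_mul_cancel₀ _ hk0.ne']
  refine ⟨β, hβ0, fun m hm => ?_⟩
  have hm0 : (0:ℝ) < (m:ℝ) := by exact_mod_cast Nat.pos_of_ne_zero (by omega)
  have hr0 : 0 < Real.sqrt m := Real.sqrt_pos.2 hm0
  set μ := Measure.pi fun _ : Fin m => P with hμ
  set bad : Set (Fin m → Z) := ⋃ y ∈ T, {s | δ + β / Real.sqrt m < empRisk ℓ s y} with hbad
  have hmeasbad_y : ∀ y : E,
      MeasurableSet {s : Fin m → Z | δ + β / Real.sqrt m < empRisk ℓ s y} := by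
    intro y
    have hme : Measurable fun s : Fin m → Z => empRisk ℓ s y := by
      unfold empRisk
      exact (Finset.measurable_sum _ fun i _ => (hmeas y).comp (measurable_pi_apply i)).const_mul _
    exact measurableSet_lt measurable_const hme
  have hbadmeas : MeasurableSet bad :=
    T.measurableSet_biUnion fun y _ => hmeasbad_y y
  have hpt : ∀ y ∈ T, μ {s | δ + β / Real.sqrt m < empRisk ℓ s y} ≤
      ENNReal.ofReal (Real.exp (-(β^2)/(2*σ'^2))) := by
    intro y hyT
    have hy := (hmemT y).1 hyT
    have hyA : y ∈ A := htA hy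
    have hRy : R y ≤ δ := hyA.2
    clear_value A
    have hsub : {s : Fin m → Z | δ + β / Real.sqrt m < empRisk ℓ s y} ⊆
        {s | β * Real.sqrt m ≤ ∑ i, (ℓ y (s i) - R y)} := by
      intro s hs
      simp only [mem_setOf_eq] at hs ⊢
      have h2 : (m:ℝ) * empRisk ℓ s y = ∑ i, ℓ y (s i) := by
        unfold empRisk; field_simp
      have h3 : (m:ℝ) * (β / Real.sqrt m) = β * Real.sqrt m := by
        rw [mul_div_assoc', div_eq_iff hr0.ne', mul_assoc, Real.mul_self_sqrt hm0.le]
        ring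
      have h4 : (m:ℝ) * (δ + β / Real.sqrt m) < ∑ i, ℓ y (s i) := by
        rw [← h2]; exact (mul_lt_mul_iff_right₀ hm0).2 hs
      rw [mul_add, h3] at h4
      have h5 : (m:ℝ) * R y ≤ (m:ℝ) * δ := mul_le_mul_of_nonneg_left hRy hm0.le
      have hsum : ∑ i, (ℓ y (s i) - R y) = (∑ i, ℓ y (s i)) - (m:ℝ) * R y := by
        rw [Finset.sum_sub_distrib, Finset.sum_const, Finset.card_univ, Fintype.card_fin,
          nsmul_eq_mul]
      rw [hsum]
      linarith
    calc μ {s : Fin m → Z | δ + β / Real.sqrt m < empRisk ℓ s y}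
        ≤ μ {s | β * Real.sqrt m ≤ ∑ i, (ℓ y (s i) - R y)} := measure_mono hsub
      _ ≤ ENNReal.ofReal (Real.exp (-(β^2)/(2*σ'^2))) :=
          chernoff_bound P (fun z => ℓ y z - R y) ((hmeas y).sub measurable_const)
            σ' hσ'1 (hsg' y hy) β hβ0 m hm
  have hbadle : μ bad ≤ ENNReal.ofReal α := by
    calc μ bad ≤ ∑ y ∈ T, μ {s | δ + β / Real.sqrt m < empRisk ℓ s y} :=
        measure_biUnion_finset_le T _
      _ ≤ ∑ _y ∈ T, ENNReal.ofReal (Real.exp (-(β^2)/(2*σ'^2))) :=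
          Finset.sum_le_sum fun y hy => hpt y hy
      _ = (k : ENNReal) * ENNReal.ofReal (Real.exp (-(β^2)/(2*σ'^2))) := by
          rw [Finset.sum_const, nsmul_eq_mul, hk]
      _ = ENNReal.ofReal ((k:ℝ) * Real.exp (-(β^2)/(2*σ'^2))) := by
          rw [ENNReal.ofReal_mul (by positivity), ENNReal.ofReal_natCast]
      _ ≤ ENNReal.ofReal α := ENNReal.ofReal_le_ofReal hkey
  have hgood : badᶜ ⊆
      {s : Fin m → Z | exs A {w ∈ W | empRisk ℓ s w ≤ δ + β / Real.sqrt m} ≤ ENNReal.ofReal γ} := by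
    intro s hsbad
    simp only [mem_setOf_eq]
    unfold exs
    apply iSup₂_le
    intro w hwA
    obtain ⟨y, hyt, hwy⟩ := mem_iUnion₂.1 (hcov hwA)
    have hyB : y ∈ {w ∈ W | empRisk ℓ s w ≤ δ + β / Real.sqrt m} := by
      refine ⟨hAW (htA hyt), ?_⟩
      by_contra h
      push_neg at h
      exact hsbad (mem_iUnion₂.2 ⟨y, (hmemT y).2 hyt, h⟩)
    calc (⨅ w' ∈ {w ∈ W | empRisk ℓ s w ≤ δ + β / Real.sqrt m}, edist w w') ≤ edist w y :=
          biInf_le _ hyB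
      _ ≤ ENNReal.ofReal γ := le_of_lt (EMetric.mem_ball.1 hwy)
  calc ENNReal.ofReal (1 - α) = 1 - ENNReal.ofReal α := by
        rw [ENNReal.ofReal_sub _ hα0.le, ENNReal.ofReal_one]
    _ ≤ 1 - μ bad := tsub_le_tsub_left hbadle 1
    _ = μ badᶜ := (prob_compl_eq_one_sub hbadmeas).symm
    _ ≤ μ {s : Fin m → Z | exs A {w ∈ W | empRisk ℓ s w ≤ δ + β / Real.sqrt m}
          ≤ ENNReal.ofReal γ} := measure_mono hgood
end

section
/- Suppose W ⊆ ℝⁿ is compact, ℓ : ℝⁿ × Z → ℝ is a locally inf-integrable Carathéodory function, and for every w ∈ W the random variable ℓ(w,·) − R(w) is subgaussian. Then for any α ∈ (0,1) and γ > 0, there exists β > 0, independent of m, such that for every m ≥ 1, with ℙ^m-probability at least 1 − α: exs( argmin_{w∈W} R(w) ; {w ∈ W : R_m(w) ≤ inf_{w̄∈W} R_m^γ(w̄) + 2β m^{−1/2}} ) ≤ γ. -/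
open MeasureTheory Metric Set

open ProbabilityTheory in
lemma chernoff_tail {Z : Type*} [MeasurableSpace Z] (P : Measure Z) [IsProbabilityMeasure P]
    (X : Z → ℝ) (σ : ℝ) (hσ : 1 ≤ σ)
    (hmgf : ∀ τ : ℝ, Integrable (fun z => Real.exp (τ * X z)) P ∧
      ∫ z, Real.exp (τ * X z) ∂P ≤ Real.exp (σ ^ 2 * τ ^ 2 / 2))
    (m : ℕ) (hm : 1 ≤ m) (β : ℝ) (hβ : 0 < β) :
    Measure.pi (fun _ : Fin m => P) {s | Real.sqrt m * β ≤ ∑ i, X (s i)} ≤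
      ENNReal.ofReal (Real.exp (-(β ^ 2) / (2 * σ ^ 2))) := by
  letI : MeasureSpace Z := ⟨P⟩
  have hσ0 : (0:ℝ) < σ := lt_of_lt_of_le one_pos hσ
  have hm0 : (0:ℝ) < m := by exact_mod_cast hm
  have hsm : (0:ℝ) < Real.sqrt m := Real.sqrt_pos.2 hm0
  have hsq : Real.sqrt m * Real.sqrt m = (m:ℝ) := Real.mul_self_sqrt hm0.le
  set τ : ℝ := β / (Real.sqrt m * σ ^ 2) with hτdef
  have hτ : 0 < τ := by positivity
  have hvol : (volume : Measure (Fin m → Z)) = Measure.pi (fun _ => P) := by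
    rw [volume_pi]; rfl
  have hprod : ∀ s : Fin m → Z, Real.exp (τ * ∑ i, X (s i)) = ∏ i, Real.exp (τ * X (s i)) := by
    intro s; rw [Finset.mul_sum, Real.exp_sum]
  have hint : Integrable (fun s : Fin m → Z => Real.exp (τ * ∑ i, X (s i)))
      (Measure.pi fun _ => P) := by
    simp_rw [hprod]; rw [← hvol]
    exact Integrable.fintype_prod (f := fun _ z => Real.exp (τ * X z)) (fun _ => (hmgf τ).1)
  have hmgfY : mgf (fun s : Fin m → Z => ∑ i, X (s i)) (Measure.pi fun _ => P) τ ≤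
      Real.exp (σ ^ 2 * τ ^ 2 / 2) ^ m := by
    rw [mgf]
    calc ∫ s, Real.exp (τ * ∑ i, X (s i)) ∂(Measure.pi fun _ => P)
        = ∫ s : Fin m → Z, ∏ i, Real.exp (τ * X (s i)) := by
          rw [hvol]; exact integral_congr_ae (Filter.Eventually.of_forall hprod)
      _ = (∫ z, Real.exp (τ * X z)) ^ (Fintype.card (Fin m)) := by
          rw [hvol]; exact integral_fintype_prod_eq_pow (fun z => Real.exp (τ * X z))
      _ ≤ _ := by
          rw [Fintype.card_fin]
          exact pow_le_pow_left₀ (integral_nonneg fun z => (Real.exp_pos _).le) ((hmgf τ).2) m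
  have hmain := measure_ge_le_exp_mul_mgf (μ := Measure.pi fun _ : Fin m => P)
      (X := fun s => ∑ i, X (s i)) (t := τ) (Real.sqrt m * β) hτ.le hint
  have hexp : Real.exp (-τ * (Real.sqrt m * β)) * Real.exp (σ ^ 2 * τ ^ 2 / 2) ^ m
      = Real.exp (-(β ^ 2) / (2 * σ ^ 2)) := by
    rw [← Real.exp_nat_mul, ← Real.exp_add, Real.exp_eq_exp]
    rw [hτdef]
    field_simp
    linear_combination (-1 : ℝ) * hsq
  refine (ENNReal.le_ofReal_iff_toReal_le (measure_ne_top _ _) (Real.exp_pos _).le).2 ?_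
  calc (Measure.pi (fun _ : Fin m => P) {s | Real.sqrt m * β ≤ ∑ i, X (s i)}).toReal
      ≤ Real.exp (-τ * (Real.sqrt m * β)) *
          mgf (fun s : Fin m → Z => ∑ i, X (s i)) (Measure.pi fun _ => P) τ := hmain
    _ ≤ Real.exp (-τ * (Real.sqrt m * β)) * Real.exp (σ ^ 2 * τ ^ 2 / 2) ^ m := by
        exact mul_le_mul_of_nonneg_left hmgfY (Real.exp_pos _).le
    _ = _ := hexp

/-- **confidence region in DRM, argmin.** Suppose `W ⊆ ℝⁿ` is compact,
`ℓ` is a locally inf-integrable Carathéodory function, and for every `w ∈ W` the random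
variable `ℓ(w,·) − R(w)` is subgaussian. Then for any `α ∈ (0,1)` and `γ > 0`, there
exists `β > 0` (independent of `m`) such that for every `m ≥ 1`, with
`ℙ^m`-probability at least `1 − α`:
`exs( argmin_{w∈W} R(w) ; {w ∈ W : R_m(w) ≤ inf_{w̄∈W} R_m^γ(w̄) + 2β m^{−1/2}} ) ≤ γ`. -/
theorem drm_confidence_region_argmin
    {E Z : Type*} [NormedAddCommGroup E] [NormedSpace ℝ E] [FiniteDimensional ℝ E]
    [MeasurableSpace Z] (P : Measure Z) [IsProbabilityMeasure P]
    (W : Set E) (hW : IsCompact W)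
    (ℓ : E → Z → ℝ)
    (hcont : ∀ z, Continuous fun w => ℓ w z)
    (hmeas : ∀ w, Measurable fun z => ℓ w z)
    (hint : ∀ w, Integrable (fun z => ℓ w z) P)
    (hlocinf : ∀ wbar : E, ∃ ρ > (0 : ℝ),
      Integrable (fun z => min 0 (⨅ w : closedBall wbar ρ, ℓ (↑w) z)) P)
    (hsg : ∀ w ∈ W, ∃ σ : ℝ,
      IsSubgaussianWith P (fun z => ℓ w z - trueRisk P ℓ w) σ)
    (α γ : ℝ) (hα : α ∈ Set.Ioo (0 : ℝ) 1) (hγ : 0 < γ) :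
    ∃ β > (0 : ℝ), ∀ m : ℕ, 1 ≤ m →
      ENNReal.ofReal (1 - α) ≤
        Measure.pi (fun _ : Fin m => P)
          {s | exs {w ∈ W | ∀ w' ∈ W, trueRisk P ℓ w ≤ trueRisk P ℓ w'}
                 {w ∈ W | empRisk ℓ s w ≤
                   (⨅ wbar : W, diamRisk ℓ γ s (↑wbar)) + 2 * β / Real.sqrt m}
               ≤ ENNReal.ofReal γ} := by
  classical
  set R : E → ℝ := trueRisk P ℓ with hRdef
  set A : Set E := {w ∈ W | ∀ w' ∈ W, R w ≤ R w'} with hAdef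
  by_cases hA : A = ∅
  · refine ⟨1, one_pos, fun m hm => ?_⟩
    have hset : {s : Fin m → Z |
        exs A {w ∈ W | empRisk ℓ s w ≤
          (⨅ wbar : W, diamRisk ℓ γ s (↑wbar)) + 2 * 1 / Real.sqrt m} ≤ ENNReal.ofReal γ}
        = univ := by
      ext s
      simp only [mem_setOf_eq, mem_univ, iff_true, hA, exs]
      simp
    rw [hset]
    simp only [measure_univ]
    exact ENNReal.ofReal_le_one.2 (by linarith [hα.1])
  -- main case
  have hAW : A ⊆ W := fun w hw => hw.1
  obtain ⟨a₀, ha₀⟩ := Set.nonempty_iff_ne_empty.2 hA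
  obtain ⟨TW, hTWsub, hTWfin, hTWcov⟩ :=
    hW.totallyBounded.exists_subset (dist_mem_uniformity hγ)
  obtain ⟨TA, hTAsub, hTAfin, hTAcov⟩ :=
    (TotallyBounded.subset hAW hW.totallyBounded).exists_subset (dist_mem_uniformity hγ)
  set F : Finset E := hTWfin.toFinset ∪ hTAfin.toFinset with hFdef
  have hFW : ∀ p ∈ F, p ∈ W := by
    intro p hp
    rcases Finset.mem_union.1 hp with h | h
    · exact hTWsub (hTWfin.mem_toFinset.1 h)
    · exact hAW (hTAsub (hTAfin.mem_toFinset.1 h))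
  have hTWmem : ∀ p ∈ TW, p ∈ F := fun p hp =>
    Finset.mem_union.2 (Or.inl (hTWfin.mem_toFinset.2 hp))
  have hTAmem : ∀ p ∈ TA, p ∈ F := fun p hp =>
    Finset.mem_union.2 (Or.inr (hTAfin.mem_toFinset.2 hp))
  -- the uniform variance proxy
  have hTAne : TA.Nonempty := by
    obtain ⟨y, hy, -⟩ := Set.mem_iUnion₂.1 (hTAcov ha₀)
    exact ⟨y, hy⟩
  have hFne : F.Nonempty := ⟨hTAne.choose, hTAmem _ hTAne.choose_spec⟩
  obtain ⟨σ, hσ1, hmgfσ⟩ : ∃ σ : ℝ, 1 ≤ σ ∧ ∀ p ∈ F, ∀ τ : ℝ,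
      Integrable (fun z => Real.exp (τ * (ℓ p z - R p))) P ∧
      ∫ z, Real.exp (τ * (ℓ p z - R p)) ∂P ≤ Real.exp (σ ^ 2 * τ ^ 2 / 2) := by
    have hchoice : ∀ p ∈ F, ∃ c : ℝ, 0 ≤ c ∧ ∀ τ : ℝ,
        Integrable (fun z => Real.exp (τ * (ℓ p z - R p))) P ∧
        ∫ z, Real.exp (τ * (ℓ p z - R p)) ∂P ≤ Real.exp (c ^ 2 * τ ^ 2 / 2) := by
      intro p hp
      obtain ⟨c, hc⟩ := hsg p (hFW p hp)
      refine ⟨|c|, abs_nonneg c, fun τ => ⟨(hc.2 τ).1, le_trans (hc.2 τ).2 ?_⟩⟩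
      rw [sq_abs]
    choose! cfun hc0 hcmgf using hchoice
    refine ⟨1 + ∑ p ∈ F, cfun p, ?_, fun p hp τ => ?_⟩
    · have : 0 ≤ ∑ p ∈ F, cfun p := Finset.sum_nonneg fun q hq => hc0 q hq
      linarith
    refine ⟨(hcmgf p hp τ).1, le_trans (hcmgf p hp τ).2 (Real.exp_le_exp.2 ?_)⟩
    have h1 : cfun p ≤ 1 + ∑ q ∈ F, cfun q := by
      have := Finset.single_le_sum (fun q hq => hc0 q hq) hp
      linarith
    have h3 : cfun p ^ 2 ≤ (1 + ∑ q ∈ F, cfun q) ^ 2 := by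
      nlinarith [hc0 p hp]
    have h4 := mul_le_mul_of_nonneg_right h3 (sq_nonneg τ)
    linarith
  have hσ0 : (0:ℝ) < σ := lt_of_lt_of_le one_pos hσ1
  obtain ⟨β, hβpos, hkey⟩ : ∃ β : ℝ, 0 < β ∧
      (F.card : ℝ) * (2 * Real.exp (-(β ^ 2) / (2 * σ ^ 2))) ≤ α := by
    have hN0 : (0:ℝ) < F.card := by exact_mod_cast Finset.card_pos.2 hFne
    have hq0 : (0:ℝ) < 2 * F.card / α := div_pos (by positivity) hα.1
    have hL1 : (1:ℝ) < 2 * F.card / α + 1 := by linarith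
    have hL0 : (0:ℝ) < 2 * F.card / α + 1 := by linarith
    have hlogL : 0 < Real.log (2 * F.card / α + 1) := Real.log_pos hL1
    refine ⟨σ * Real.sqrt (2 * Real.log (2 * F.card / α + 1)),
      mul_pos hσ0 (Real.sqrt_pos.2 (by linarith)), ?_⟩
    have hβ2 : (σ * Real.sqrt (2 * Real.log (2 * F.card / α + 1))) ^ 2
        = σ ^ 2 * (2 * Real.log (2 * F.card / α + 1)) := by
      rw [mul_pow, Real.sq_sqrt (by linarith)]
    have harg : -((σ * Real.sqrt (2 * Real.log (2 * F.card / α + 1))) ^ 2) / (2 * σ ^ 2)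
        = -Real.log (2 * F.card / α + 1) := by
      rw [hβ2]; field_simp
    rw [harg, Real.exp_neg, Real.exp_log hL0]
    have hconv : (F.card:ℝ) * (2 * (2 * F.card / α + 1)⁻¹)
        = 2 * F.card / (2 * F.card / α + 1) := by ring
    rw [hconv, div_le_iff₀ hL0]
    have hαL : α * (2 * F.card / α + 1) = 2 * F.card + α := by
      rw [mul_add, mul_one]; rw [show α * (2 * (F.card:ℝ) / α) = 2 * F.card * (α / α) from by ring, div_self hα.1.ne', mul_one]
    rw [hαL]
    linarith [hα.1]
  refine ⟨β, hβpos, fun m hm => ?_⟩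
  have hm0 : (0:ℝ) < m := by exact_mod_cast hm
  have hsm : (0:ℝ) < Real.sqrt m := Real.sqrt_pos.2 hm0
  have hsq : Real.sqrt m * Real.sqrt m = (m:ℝ) := Real.mul_self_sqrt hm0.le
  set μ : Measure (Fin m → Z) := Measure.pi (fun _ : Fin m => P) with hμdef
  set Epart : E → Set (Fin m → Z) :=
    fun p => {s | |∑ i, (ℓ p (s i) - R p)| ≤ Real.sqrt m * β} with hEpart
  set Eev : Set (Fin m → Z) := ⋂ p ∈ (F : Set E), Epart p with hEev
  have hmeasE : MeasurableSet Eev := by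
    refine Set.Finite.measurableSet_biInter F.finite_toSet (fun p _ => ?_)
    have hf : Measurable fun s : Fin m → Z => ∑ i, (ℓ p (s i) - R p) :=
      Finset.measurable_sum _ fun i _ =>
        ((hmeas p).comp (measurable_pi_apply i)).sub measurable_const
    exact measurableSet_le hf.abs measurable_const
  -- Step A : deterministic inclusion
  have hstepA : Eev ⊆ {s : Fin m → Z |
      exs A {w ∈ W | empRisk ℓ s w ≤
        (⨅ wbar : W, diamRisk ℓ γ s (↑wbar)) + 2 * β / Real.sqrt m} ≤ ENNReal.ofReal γ} := by
    intro s hs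
    have hEb : ∀ p ∈ F, |∑ i, (ℓ p (s i) - R p)| ≤ Real.sqrt m * β := by
      intro p hp
      exact Set.mem_iInter₂.1 hs p hp
    have hemp : ∀ p ∈ F, |empRisk ℓ s p - R p| ≤ β / Real.sqrt m := by
      intro p hp
      have h := hEb p hp
      have hdiff : empRisk ℓ s p - R p = (1 / (m:ℝ)) * ∑ i, (ℓ p (s i) - R p) := by
        rw [Finset.sum_sub_distrib, Finset.sum_const, Finset.card_univ, Fintype.card_fin,
          nsmul_eq_mul]
        show (1 / (m:ℝ)) * ∑ i, ℓ p (s i) - R p = _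
        field_simp
      rw [hdiff, abs_mul, abs_of_pos (by positivity : (0:ℝ) < 1 / (m:ℝ))]
      calc 1 / (m:ℝ) * |∑ i, (ℓ p (s i) - R p)| ≤ 1 / (m:ℝ) * (Real.sqrt m * β) := by
            exact mul_le_mul_of_nonneg_left h (by positivity)
        _ = β / Real.sqrt m := by
            field_simp
            linear_combination hsq
    have hinfge : ∀ a ∈ A,
        R a - β / Real.sqrt m ≤ ⨅ wbar : W, diamRisk ℓ γ s (↑wbar) := by
      intro a ha
      haveI : Nonempty ↥W := ⟨⟨a, hAW ha⟩⟩
      refine le_ciInf fun wbar => ?_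
      obtain ⟨p, hpTW, hdist⟩ : ∃ p ∈ TW, dist (wbar : E) p < γ := by
        obtain ⟨p, hp, hx⟩ := Set.mem_iUnion₂.1 (hTWcov wbar.2)
        exact ⟨p, hp, hx⟩
      have hBdd : BddAbove
          (Set.range fun v : (closedBall (0:E) γ) => empRisk ℓ s ((wbar : E) + ↑v)) := by
        have hc : Continuous fun v : E => empRisk ℓ s ((wbar : E) + v) := by
          show Continuous fun v : E => (1 / (m:ℝ)) * ∑ i, ℓ ((wbar : E) + v) (s i)
          exact continuous_const.mul (continuous_finset_sum _ fun i _ =>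
            (hcont (s i)).comp (continuous_const.add continuous_id))
        have hrange : (Set.range fun v : (closedBall (0:E) γ) => empRisk ℓ s ((wbar : E) + ↑v))
            = (fun v : E => empRisk ℓ s ((wbar : E) + v)) '' closedBall (0:E) γ := by
          ext x
          simp [Set.mem_image]
        rw [hrange]
        exact ((isCompact_closedBall _ _).image hc).bddAbove
      have hv : (p - (wbar : E)) ∈ closedBall (0:E) γ := by
        rw [mem_closedBall, dist_zero_right, ← dist_eq_norm]
        rw [dist_comm]
        exact hdist.le
      have hle := le_ciSup hBdd (⟨p - (wbar : E), hv⟩ : (closedBall (0:E) γ))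
      have heq : (wbar : E) + (p - (wbar : E)) = p := by abel
      rw [heq] at hle
      have h1 := abs_le.1 (hemp p (hTWmem p hpTW))
      have h2 : R a ≤ R p := ha.2 p (hTWsub hpTW)
      have hdr : empRisk ℓ s p ≤ diamRisk ℓ γ s (wbar : E) := hle
      have := h1.1
      linarith
    simp only [mem_setOf_eq]
    rw [exs]
    refine iSup₂_le fun w hw => ?_
    obtain ⟨a, haTA, hdista⟩ : ∃ a ∈ TA, dist w a < γ := by
      obtain ⟨a, ha, hx⟩ := Set.mem_iUnion₂.1 (hTAcov hw)
      exact ⟨a, ha, hx⟩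
    have haA : a ∈ A := hTAsub haTA
    have haB : a ∈ {w ∈ W | empRisk ℓ s w ≤
        (⨅ wbar : W, diamRisk ℓ γ s (↑wbar)) + 2 * β / Real.sqrt m} := by
      refine ⟨hAW haA, ?_⟩
      have h1 := (abs_le.1 (hemp a (hTAmem a haTA))).2
      have h2 := hinfge a haA
      have : 2 * β / Real.sqrt m = β / Real.sqrt m + β / Real.sqrt m := by ring
      rw [this]
      linarith
    calc (⨅ w' ∈ {w ∈ W | empRisk ℓ s w ≤
            (⨅ wbar : W, diamRisk ℓ γ s (↑wbar)) + 2 * β / Real.sqrt m}, edist w w')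
        ≤ edist w a := iInf₂_le a haB
      _ ≤ ENNReal.ofReal γ := by
          rw [edist_dist]
          exact ENNReal.ofReal_le_ofReal hdista.le
  -- Step B : probability bound
  have hcompl : μ Eevᶜ ≤ ENNReal.ofReal α := by
    have hEc : Eevᶜ = ⋃ p ∈ F, (Epart p)ᶜ := by
      rw [hEev, Set.compl_iInter]
      simp [Set.compl_iInter]
    rw [hEc]
    have hper : ∀ p ∈ F, μ ((Epart p)ᶜ) ≤
        ENNReal.ofReal (2 * Real.exp (-(β ^ 2) / (2 * σ ^ 2))) := by
      intro p hp
      have hsub : (Epart p)ᶜ ⊆ {s : Fin m → Z | Real.sqrt m * β ≤ ∑ i, (ℓ p (s i) - R p)}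
          ∪ {s : Fin m → Z | Real.sqrt m * β ≤ ∑ i, -(ℓ p (s i) - R p)} := by
        intro s hs
        simp only [hEpart, mem_setOf_eq, mem_compl_iff, not_le] at hs
        rcases le_abs.1 hs.le with h | h
        · exact Or.inl h
        · refine Or.inr ?_
          simpa [Finset.sum_neg_distrib] using h
      have c1 := chernoff_tail P (fun z => ℓ p z - R p) σ hσ1 (hmgfσ p hp) m hm β hβpos
      have c2 : μ {s : Fin m → Z | Real.sqrt m * β ≤ ∑ i, -(ℓ p (s i) - R p)} ≤
          ENNReal.ofReal (Real.exp (-(β ^ 2) / (2 * σ ^ 2))) := by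
        refine chernoff_tail P (fun z => -(ℓ p z - R p)) σ hσ1 ?_ m hm β hβpos
        intro τ
        have h := hmgfσ p hp (-τ)
        constructor
        · have hfun : (fun z => Real.exp (τ * -(ℓ p z - R p)))
              = fun z => Real.exp (-τ * (ℓ p z - R p)) := by
            funext z; congr 1; ring
          rw [hfun]
          exact h.1
        · have hfun : (fun z => Real.exp (τ * -(ℓ p z - R p)))
              = fun z => Real.exp (-τ * (ℓ p z - R p)) := by
            funext z; congr 1; ring
          have h2 := h.2
          simp only [neg_sq] at h2
          calc ∫ z, Real.exp (τ * -(ℓ p z - R p)) ∂P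
              = ∫ z, Real.exp (-τ * (ℓ p z - R p)) ∂P := by rw [hfun]
            _ ≤ _ := h2
      calc μ ((Epart p)ᶜ) ≤ μ ({s : Fin m → Z | Real.sqrt m * β ≤ ∑ i, (ℓ p (s i) - R p)}
              ∪ {s : Fin m → Z | Real.sqrt m * β ≤ ∑ i, -(ℓ p (s i) - R p)}) :=
            measure_mono hsub
        _ ≤ μ {s : Fin m → Z | Real.sqrt m * β ≤ ∑ i, (ℓ p (s i) - R p)}
              + μ {s : Fin m → Z | Real.sqrt m * β ≤ ∑ i, -(ℓ p (s i) - R p)} :=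
            measure_union_le _ _
        _ ≤ ENNReal.ofReal (Real.exp (-(β ^ 2) / (2 * σ ^ 2)))
              + ENNReal.ofReal (Real.exp (-(β ^ 2) / (2 * σ ^ 2))) := add_le_add c1 c2
        _ = ENNReal.ofReal (2 * Real.exp (-(β ^ 2) / (2 * σ ^ 2))) := by
            rw [← ENNReal.ofReal_add (Real.exp_pos _).le (Real.exp_pos _).le]
            ring_nf
    calc μ (⋃ p ∈ F, (Epart p)ᶜ) ≤ ∑ p ∈ F, μ ((Epart p)ᶜ) := measure_biUnion_finset_le F _
      _ ≤ ∑ p ∈ F, ENNReal.ofReal (2 * Real.exp (-(β ^ 2) / (2 * σ ^ 2))) :=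
          Finset.sum_le_sum hper
      _ = (F.card : ENNReal) * ENNReal.ofReal (2 * Real.exp (-(β ^ 2) / (2 * σ ^ 2))) := by
          rw [Finset.sum_const, nsmul_eq_mul]
      _ ≤ ENNReal.ofReal α := by
          rw [← ENNReal.ofReal_natCast F.card, ← ENNReal.ofReal_mul (Nat.cast_nonneg _)]
          exact ENNReal.ofReal_le_ofReal hkey
  have h1 : μ Eev + μ Eevᶜ = 1 := by
    rw [measure_add_measure_compl hmeasE]
    exact measure_univ
  calc ENNReal.ofReal (1 - α) = 1 - ENNReal.ofReal α := by
        rw [ENNReal.ofReal_sub 1 hα.1.le, ENNReal.ofReal_one]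
    _ ≤ 1 - μ Eevᶜ := tsub_le_tsub_left hcompl 1
    _ ≤ μ Eev := by
        rw [tsub_le_iff_right, h1]
    _ ≤ _ := measure_mono hstepA
end

section
/- Suppose W ⊆ ℝⁿ is compact, ℓ : ℝⁿ × Z → ℝ is a locally sup-integrable Carathéodory function, and for every w ∈ W the random variable ℓ(w,·) − R(w) is subgaussian. Then for any α ∈ (0,1) and γ > 0 there exists β > 0, independent of m, such that for every δ ∈ ℝ and every m ≥ 1, with ℙ^m-probability at least 1 − α: {w ∈ W : R_m^γ(w) ≤ δ} ⊆ {w ∈ W : R(w) ≤ δ + β m^{−1/2}}. -/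
open MeasureTheory Metric Set

open Filter

lemma usc_max {X : Type*} [TopologicalSpace X] {f : X → ℝ}
    (hf : UpperSemicontinuous f) {C : Set X} (hC : IsCompact C) (hne : C.Nonempty) :
    ∃ u ∈ C, ∀ w ∈ C, f w ≤ f u := by
  by_contra h
  push_neg at h
  have cover : C ⊆ ⋃ w ∈ C, f ⁻¹' Iio (f w) := by
    intro x hx
    obtain ⟨w, hw, hlt⟩ := h x hx
    exact mem_biUnion hw hlt
  obtain ⟨t, htC, htfin, hcov⟩ :=
    hC.elim_finite_subcover_image (fun w _ => hf.isOpen_preimage (f w)) cover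
  obtain ⟨x0, hx0⟩ := hne
  have hx0' := hcov hx0
  simp only [mem_iUnion, exists_prop] at hx0'
  obtain ⟨w0, hw0t, _⟩ := hx0'
  obtain ⟨u, hut, hmax⟩ := Set.exists_max_image t f htfin ⟨w0, hw0t⟩
  have hu := hcov (htC hut)
  simp only [mem_iUnion, exists_prop] at hu
  obtain ⟨w', hw't, hlt⟩ := hu
  exact absurd (hmax w' hw't) (not_le.mpr hlt)

lemma trueRisk_usc {E Z : Type*} [NormedAddCommGroup E] [NormedSpace ℝ E]
    [FiniteDimensional ℝ E] [MeasurableSpace Z] (P : Measure Z)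
    (ℓ : E → Z → ℝ)
    (hcont : ∀ z, Continuous fun w => ℓ w z)
    (hint : ∀ w, Integrable (fun z => ℓ w z) P)
    (hlocsup : ∀ wbar : E, ∃ ρ > (0 : ℝ),
      Integrable (fun z => max 0 (⨆ w : closedBall wbar ρ, ℓ (↑w) z)) P) :
    UpperSemicontinuous (trueRisk P ℓ) := by
  intro wb y hy
  obtain ⟨ρ, hρ, hg⟩ := hlocsup wb
  set g : Z → ℝ := fun z => max 0 (⨆ w : closedBall wb ρ, ℓ (↑w) z) with hgdef
  have hgle : ∀ w ∈ closedBall wb ρ, ∀ z, ℓ w z ≤ g z := by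
    intro w hw z
    have hbdd : BddAbove (Set.range fun v : closedBall wb ρ => ℓ (↑v) z) := by
      have : (fun v => ℓ v z) '' closedBall wb ρ =
          Set.range fun v : closedBall wb ρ => ℓ (↑v) z := Set.image_eq_range _ _
      rw [← this]
      exact ((isCompact_closedBall wb ρ).image (hcont z)).bddAbove
    exact le_trans (le_ciSup hbdd ⟨w, hw⟩) (le_max_right _ _)
  by_contra h
  rw [Filter.not_eventually] at h
  have h2 : ∃ᶠ w in nhds wb, y ≤ trueRisk P ℓ w ∧ w ∈ closedBall wb ρ := by
    refine (h.and_eventually (Metric.closedBall_mem_nhds wb hρ)).mono ?_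
    intro w hw
    exact ⟨not_lt.mp hw.1, hw.2⟩
  obtain ⟨u, hut, hu⟩ := Filter.exists_seq_forall_of_frequently h2
  -- integrability facts
  have hintn : ∀ n, Integrable (fun z => g z - ℓ (u n) z) P := fun n => hg.sub (hint (u n))
  have hintb : Integrable (fun z => g z - ℓ wb z) P := hg.sub (hint wb)
  have hnonneg : ∀ n, ∀ z, 0 ≤ g z - ℓ (u n) z := fun n z =>
    sub_nonneg.mpr (hgle (u n) (hu n).2 z)
  have hnonnegb : ∀ z, 0 ≤ g z - ℓ wb z := fun z =>
    sub_nonneg.mpr (hgle wb (mem_closedBall_self hρ.le) z)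
  -- Fatou
  have fatou :
      ∫⁻ z, liminf (fun n => ENNReal.ofReal (g z - ℓ (u n) z)) atTop ∂P ≤
      liminf (fun n => ∫⁻ z, ENNReal.ofReal (g z - ℓ (u n) z) ∂P) atTop :=
    lintegral_liminf_le' fun n => (ENNReal.measurable_ofReal.comp_aemeasurable
      ((hg.aemeasurable).sub (hint (u n)).aemeasurable))
  have hlim : ∀ z, liminf (fun n => ENNReal.ofReal (g z - ℓ (u n) z)) atTop =
      ENNReal.ofReal (g z - ℓ wb z) := by
    intro z
    have h1 : Tendsto (fun n => ℓ (u n) z) atTop (nhds (ℓ wb z)) :=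
      ((hcont z).continuousAt.tendsto).comp hut
    have h2 : Tendsto (fun n => ENNReal.ofReal (g z - ℓ (u n) z)) atTop
        (nhds (ENNReal.ofReal (g z - ℓ wb z))) :=
      (ENNReal.continuous_ofReal.continuousAt.tendsto).comp
        ((tendsto_const_nhds.sub h1))
    exact h2.liminf_eq
  have hLHS : ∫⁻ z, liminf (fun n => ENNReal.ofReal (g z - ℓ (u n) z)) atTop ∂P =
      ENNReal.ofReal (∫ z, (g z - ℓ wb z) ∂P) := by
    simp_rw [hlim]
    exact (ofReal_integral_eq_lintegral_ofReal hintb (Filter.Eventually.of_forall hnonnegb)).symm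
  rw [hLHS] at fatou
  have hRHSn : ∀ n, ∫⁻ z, ENNReal.ofReal (g z - ℓ (u n) z) ∂P =
      ENNReal.ofReal (∫ z, (g z - ℓ (u n) z) ∂P) := fun n =>
    (ofReal_integral_eq_lintegral_ofReal (hintn n) (Filter.Eventually.of_forall (hnonneg n))).symm
  have hsub : ∀ n, ∫ z, (g z - ℓ (u n) z) ∂P = ∫ z, g z ∂P - trueRisk P ℓ (u n) := fun n =>
    integral_sub hg (hint (u n))
  have hsubb : ∫ z, (g z - ℓ wb z) ∂P = ∫ z, g z ∂P - trueRisk P ℓ wb :=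
    integral_sub hg (hint wb)
  set c : ℝ := ∫ z, g z ∂P - y with hc
  rcases lt_or_ge c 0 with hcneg | hcpos
  · have h0 : (0:ℝ) ≤ ∫ z, (g z - ℓ (u 0) z) ∂P := integral_nonneg (hnonneg 0)
    have : ∫ z, (g z - ℓ (u 0) z) ∂P ≤ c := by
      rw [hsub 0, hc]
      exact sub_le_sub_left (hu 0).1 _
    linarith
  · have hbound : ∀ n, ∫⁻ z, ENNReal.ofReal (g z - ℓ (u n) z) ∂P ≤ ENNReal.ofReal c := by
      intro n
      rw [hRHSn n]
      refine ENNReal.ofReal_le_ofReal ?_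
      rw [hsub n, hc]
      exact sub_le_sub_left (hu n).1 _
    have hliminf_le : liminf (fun n => ∫⁻ z, ENNReal.ofReal (g z - ℓ (u n) z) ∂P) atTop ≤
        ENNReal.ofReal c := by
      refine le_trans (Filter.liminf_le_liminf (Filter.Eventually.of_forall hbound)) ?_
      simp
    have final : ENNReal.ofReal (∫ z, (g z - ℓ wb z) ∂P) ≤ ENNReal.ofReal c :=
      fatou.trans hliminf_le
    rw [ENNReal.ofReal_le_ofReal_iff hcpos] at final
    rw [hsubb, hc] at final
    linarith

lemma pi_integral_pow {Z : Type*} [MeasurableSpace Z] (P : Measure Z)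
    [IsProbabilityMeasure P] (m : ℕ) (f : Z → ℝ) :
    ∫ s : Fin m → Z, ∏ i, f (s i) ∂(Measure.pi fun _ => P) = (∫ z, f z ∂P) ^ m := by
  letI : MeasureSpace Z := ⟨P⟩
  haveI : SigmaFinite (volume : Measure Z) := inferInstanceAs (SigmaFinite P)
  rw [show (Measure.pi fun _ : Fin m => P) = (volume : Measure (Fin m → Z)) from
    (MeasureTheory.volume_pi).symm]
  have h := MeasureTheory.integral_fintype_prod_volume_eq_pow (𝕜 := ℝ) (ι := Fin m) f; rw [Fintype.card_fin] at h; exact h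

lemma pi_integrable_prod {Z : Type*} [MeasurableSpace Z] (P : Measure Z)
    [IsProbabilityMeasure P] (m : ℕ) (f : Z → ℝ) (hf : Integrable f P) :
    Integrable (fun s : Fin m → Z => ∏ i, f (s i)) (Measure.pi fun _ => P) := by
  letI : MeasureSpace Z := ⟨P⟩
  haveI : SigmaFinite (volume : Measure Z) := inferInstanceAs (SigmaFinite P)
  rw [show (Measure.pi fun _ : Fin m => P) = (volume : Measure (Fin m → Z)) from
    (MeasureTheory.volume_pi).symm]
  exact MeasureTheory.Integrable.fintype_prod (𝕜 := ℝ) (fun _ => hf)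

lemma chernoff_aux {Z : Type*} [MeasurableSpace Z] (P : Measure Z) [IsProbabilityMeasure P]
    (X : Z → ℝ) {σ : ℝ} (hσ : 1 ≤ σ)
    (hsg : ∀ τ : ℝ, Integrable (fun z => Real.exp (τ * X z)) P ∧
      ∫ z, Real.exp (τ * X z) ∂P ≤ Real.exp (σ ^ 2 * τ ^ 2 / 2))
    (β : ℝ) (hβ : 0 < β) (m : ℕ) (hm : 1 ≤ m) :
    Measure.pi (fun _ : Fin m => P) {s | β * Real.sqrt m ≤ ∑ i, X (s i)} ≤
      ENNReal.ofReal (Real.exp (-(β ^ 2) / (2 * σ ^ 2))) := by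
  have hσ0 : (0:ℝ) < σ := lt_of_lt_of_le one_pos hσ
  have hm0 : (0:ℝ) < (m:ℝ) := by exact_mod_cast hm
  have hsm : (0:ℝ) < Real.sqrt m := Real.sqrt_pos.mpr hm0
  set τ : ℝ := β / (σ ^ 2 * Real.sqrt m) with hτdef
  have hτpos : 0 < τ := div_pos hβ (by positivity)
  set S : (Fin m → Z) → ℝ := fun s => ∑ i, X (s i) with hS
  have hexp : ∀ s : Fin m → Z, Real.exp (τ * S s) = ∏ i, Real.exp (τ * X (s i)) := by
    intro s
    rw [hS, Finset.mul_sum, Real.exp_sum]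
  have hint : Integrable (fun s => Real.exp (τ * S s)) (Measure.pi fun _ : Fin m => P) := by
    have := pi_integrable_prod P m (fun z => Real.exp (τ * X z)) (hsg τ).1
    simpa only [hexp] using this
  have markov := ProbabilityTheory.measure_ge_le_exp_mul_mgf
    (μ := Measure.pi fun _ : Fin m => P) (X := S) (β * Real.sqrt m) hτpos.le hint
  have hmgf : ProbabilityTheory.mgf S (Measure.pi fun _ : Fin m => P) τ ≤
      Real.exp (σ ^ 2 * τ ^ 2 / 2) ^ m := by
    have h1 : ProbabilityTheory.mgf S (Measure.pi fun _ : Fin m => P) τ =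
        (∫ z, Real.exp (τ * X z) ∂P) ^ m := by
      rw [ProbabilityTheory.mgf]
      rw [show (fun s => Real.exp (τ * S s)) = fun s : Fin m → Z =>
        ∏ i, Real.exp (τ * X (s i)) from funext hexp]
      exact pi_integral_pow P m (fun z => Real.exp (τ * X z))
    rw [h1]
    exact pow_le_pow_left₀ (integral_nonneg fun z => (Real.exp_pos _).le) (hsg τ).2 m
  have key : Real.exp (-τ * (β * Real.sqrt m)) * Real.exp (σ ^ 2 * τ ^ 2 / 2) ^ m =
      Real.exp (-(β ^ 2) / (2 * σ ^ 2)) := by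
    rw [← Real.exp_nat_mul, ← Real.exp_add]
    congr 1
    have h2 : Real.sqrt m ^ 2 = (m:ℝ) := Real.sq_sqrt hm0.le
    rw [hτdef]
    field_simp
    linear_combination (-1 : ℝ) * h2
  have hfin : ((Measure.pi fun _ : Fin m => P) {s | β * Real.sqrt m ≤ S s}).toReal ≤
      Real.exp (-(β ^ 2) / (2 * σ ^ 2)) := by
    calc ((Measure.pi fun _ : Fin m => P) {s | β * Real.sqrt m ≤ S s}).toReal
        ≤ Real.exp (-τ * (β * Real.sqrt m)) *
          ProbabilityTheory.mgf S (Measure.pi fun _ : Fin m => P) τ := markov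
      _ ≤ Real.exp (-τ * (β * Real.sqrt m)) * Real.exp (σ ^ 2 * τ ^ 2 / 2) ^ m :=
          mul_le_mul_of_nonneg_left hmgf (Real.exp_pos _).le
      _ = _ := key
  calc (Measure.pi fun _ : Fin m => P) {s | β * Real.sqrt m ≤ S s}
      = ENNReal.ofReal (((Measure.pi fun _ : Fin m => P)
          {s | β * Real.sqrt m ≤ S s}).toReal) := by
        rw [ENNReal.ofReal_toReal (measure_ne_top _ _)]
    _ ≤ ENNReal.ofReal (Real.exp (-(β ^ 2) / (2 * σ ^ 2))) := ENNReal.ofReal_le_ofReal hfin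

/-- **level sets of the diametrical risk.** Suppose `W ⊆ ℝⁿ` is compact,
`ℓ` is a locally sup-integrable Carathéodory function, and for every `w ∈ W` the random
variable `ℓ(w,·) − R(w)` is subgaussian. Then for any `α ∈ (0,1)` and `γ > 0` there
exists `β > 0`, independent of `m`, such that for every `δ ∈ ℝ` and every `m ≥ 1`, with
`ℙ^m`-probability at least `1 − α`:
`{w ∈ W : R_m^γ(w) ≤ δ} ⊆ {w ∈ W : R(w) ≤ δ + β m^{−1/2}}`. -/
theorem drm_level_set_inclusion
    {E Z : Type*} [NormedAddCommGroup E] [NormedSpace ℝ E] [FiniteDimensional ℝ E]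
    [MeasurableSpace Z] (P : Measure Z) [IsProbabilityMeasure P]
    (W : Set E) (hW : IsCompact W)
    (ℓ : E → Z → ℝ)
    (hcont : ∀ z, Continuous fun w => ℓ w z)
    (hmeas : ∀ w, Measurable fun z => ℓ w z)
    (hint : ∀ w, Integrable (fun z => ℓ w z) P)
    (hlocsup : ∀ wbar : E, ∃ ρ > (0 : ℝ),
      Integrable (fun z => max 0 (⨆ w : closedBall wbar ρ, ℓ (↑w) z)) P)
    (hsg : ∀ w ∈ W, ∃ σ : ℝ,
      IsSubgaussianWith P (fun z => ℓ w z - trueRisk P ℓ w) σ)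
    (α γ : ℝ) (hα : α ∈ Set.Ioo (0 : ℝ) 1) (hγ : 0 < γ) :
    ∃ β > (0 : ℝ), ∀ δ : ℝ, ∀ m : ℕ, 1 ≤ m →
      ENNReal.ofReal (1 - α) ≤
        Measure.pi (fun _ : Fin m => P)
          {s | {w ∈ W | diamRisk ℓ γ s w ≤ δ} ⊆
               {w ∈ W | trueRisk P ℓ w ≤ δ + β / Real.sqrt m}} := by
  by_cases hWne : W.Nonempty
  swap
  · -- W is empty : the inclusion always holds
    rw [Set.not_nonempty_iff_eq_empty] at hWne
    refine ⟨1, one_pos, fun δ m hm => ?_⟩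
    have huniv : {s : Fin m → Z | {w ∈ W | diamRisk ℓ γ s w ≤ δ} ⊆
        {w ∈ W | trueRisk P ℓ w ≤ δ + 1 / Real.sqrt m}} = Set.univ := by
      refine eq_univ_of_forall fun s w hw => ?_
      rw [hWne] at hw
      exact absurd hw.1 (notMem_empty w)
    rw [huniv]
    simp only [measure_univ]
    exact ENNReal.ofReal_le_one.mpr (by linarith [hα.1])
  -- main case
  have husc : UpperSemicontinuous (trueRisk P ℓ) := trueRisk_usc P ℓ hcont hint hlocsup
  have hγ2 : (0:ℝ) < γ / 2 := by linarith
  -- finite cover of W by balls of radius γ/2 centered in W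
  have hcover : W ⊆ ⋃ x ∈ W, ball x (γ / 2) := fun x hx =>
    mem_biUnion hx (mem_ball_self hγ2)
  obtain ⟨t, htW, htfin, hcov⟩ :=
    hW.elim_finite_subcover_image (fun x _ => isOpen_ball) hcover
  -- for each center, a maximizer of the true risk with a subgaussian bound
  have hkey : ∀ x ∈ t, ∃ u : E, ∃ σ : ℝ, u ∈ W ∧ dist u x ≤ γ / 2 ∧
      (∀ w' ∈ W ∩ closedBall x (γ / 2), trueRisk P ℓ w' ≤ trueRisk P ℓ u) ∧ 1 ≤ σ ∧
      (∀ τ : ℝ, Integrable (fun z => Real.exp (τ * (trueRisk P ℓ u - ℓ u z))) P ∧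
        ∫ z, Real.exp (τ * (trueRisk P ℓ u - ℓ u z)) ∂P ≤ Real.exp (σ ^ 2 * τ ^ 2 / 2)) := by
    intro x hx
    have hCcomp : IsCompact (W ∩ closedBall x (γ / 2)) := hW.inter_right isClosed_closedBall
    have hCne : (W ∩ closedBall x (γ / 2)).Nonempty :=
      ⟨x, htW hx, mem_closedBall_self hγ2.le⟩
    obtain ⟨u, huC, humax⟩ := usc_max husc hCcomp hCne
    obtain ⟨σ', hσ'⟩ := hsg u huC.1
    refine ⟨u, |σ'| ⊔ 1, huC.1, huC.2, humax, le_max_right _ _, fun τ => ?_⟩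
    obtain ⟨hi, hb⟩ := hσ'.2 (-τ)
    have heq : (fun z => Real.exp ((-τ) * (ℓ u z - trueRisk P ℓ u))) =
        fun z => Real.exp (τ * (trueRisk P ℓ u - ℓ u z)) := by
      funext z; congr 1; ring
    rw [heq] at hi hb
    refine ⟨hi, hb.trans (Real.exp_le_exp.mpr ?_)⟩
    have h1 : σ' ^ 2 ≤ (|σ'| ⊔ 1) ^ 2 := by
      rw [← sq_abs σ']
      exact pow_le_pow_left₀ (abs_nonneg _) (le_max_left _ _) 2
    have h2 : (-τ) ^ 2 = τ ^ 2 := neg_sq τ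
    rw [h2]
    nlinarith [sq_nonneg τ]
  choose! u σ hprop using hkey
  -- the finite index set
  set T : Finset E := htfin.toFinset with hT
  have hmemT : ∀ x, x ∈ T ↔ x ∈ t := fun x => htfin.mem_toFinset
  obtain ⟨w0, hw0⟩ := hWne
  have hw0' := hcov hw0
  simp only [mem_iUnion, exists_prop] at hw0'
  obtain ⟨x0, hx0t, _⟩ := hw0'
  have hTne : T.Nonempty := ⟨x0, (hmemT x0).2 hx0t⟩
  set σb : ℝ := T.sup' hTne σ with hσb
  have hσb1 : 1 ≤ σb :=
    le_trans (hprop x0 hx0t).2.2.2.1 (Finset.le_sup' σ ((hmemT x0).2 hx0t))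
  have hσbx : ∀ x ∈ T, σ x ≤ σb := fun x hx => Finset.le_sup' σ hx
  set N : ℕ := T.card with hN
  have hNpos : (0:ℝ) < (N:ℝ) + 1 := by positivity
  have hlogpos : 0 < Real.log (((N:ℝ) + 1) / α) := by
    apply Real.log_pos
    rw [lt_div_iff₀ hα.1]
    nlinarith [hα.2, (Nat.cast_nonneg N : (0:ℝ) ≤ (N:ℝ))]
  set β : ℝ := σb * Real.sqrt (2 * Real.log (((N:ℝ) + 1) / α)) with hβdef
  have hβ : 0 < β := mul_pos (lt_of_lt_of_le one_pos hσb1)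
    (Real.sqrt_pos.mpr (by linarith))
  have hexpeq : Real.exp (-(β ^ 2) / (2 * σb ^ 2)) = α / ((N:ℝ) + 1) := by
    have hσb0 : (0:ℝ) < σb := lt_of_lt_of_le one_pos hσb1
    have hβsq : β ^ 2 = σb ^ 2 * (2 * Real.log (((N:ℝ) + 1) / α)) := by
      rw [hβdef, mul_pow, Real.sq_sqrt (by linarith)]
    have harg : -(β ^ 2) / (2 * σb ^ 2) = -Real.log (((N:ℝ) + 1) / α) := by
      rw [hβsq]; field_simp
    rw [harg, Real.exp_neg, Real.exp_log (div_pos hNpos hα.1), inv_div]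
  refine ⟨β, hβ, fun δ m hm => ?_⟩
  have hm0 : (0:ℝ) < (m:ℝ) := by exact_mod_cast hm
  have hsm : (0:ℝ) < Real.sqrt m := Real.sqrt_pos.mpr hm0
  set μ := Measure.pi (fun _ : Fin m => P) with hμ
  -- the bad events
  set Bad : E → Set (Fin m → Z) := fun x =>
    {s | β * Real.sqrt m ≤ ∑ i, (trueRisk P ℓ (u x) - ℓ (u x) (s i))} with hBad
  have hBadmeas : ∀ x, MeasurableSet (Bad x) := by
    intro x
    apply measurableSet_le measurable_const
    exact Finset.measurable_sum _ fun i _ =>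
      (measurable_const.sub (hmeas (u x))).comp (measurable_pi_apply i)
  have hBadle : ∀ x ∈ T, μ (Bad x) ≤ ENNReal.ofReal (α / ((N:ℝ) + 1)) := by
    intro x hx
    have hx' := (hmemT x).1 hx
    obtain ⟨huW, hud, humax, hσ1, hsgτ⟩ := hprop x hx'
    have hσx0 : (0:ℝ) < σ x := lt_of_lt_of_le one_pos hσ1
    calc μ (Bad x) ≤ ENNReal.ofReal (Real.exp (-(β ^ 2) / (2 * (σ x) ^ 2))) :=
          chernoff_aux P _ hσ1 hsgτ β hβ m hm
      _ ≤ ENNReal.ofReal (Real.exp (-(β ^ 2) / (2 * σb ^ 2))) := by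
          apply ENNReal.ofReal_le_ofReal
          apply Real.exp_le_exp.mpr
          rw [neg_div, neg_div, neg_le_neg_iff]
          have hle := hσbx x hx
          exact (div_le_div_iff_of_pos_left (by positivity) (by nlinarith) (by nlinarith)).mpr
            (by nlinarith)
      _ = ENNReal.ofReal (α / ((N:ℝ) + 1)) := by rw [hexpeq]
  set B : Set (Fin m → Z) := ⋃ x ∈ T, Bad x with hB
  have hBmeas : MeasurableSet B := T.measurableSet_biUnion fun x _ => hBadmeas x
  have hBle : μ B ≤ ENNReal.ofReal α := by
    calc μ B ≤ ∑ x ∈ T, μ (Bad x) := measure_biUnion_finset_le T Bad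
      _ ≤ ∑ x ∈ T, ENNReal.ofReal (α / ((N:ℝ) + 1)) := Finset.sum_le_sum hBadle
      _ = (N : ENNReal) * ENNReal.ofReal (α / ((N:ℝ) + 1)) := by
          rw [Finset.sum_const, nsmul_eq_mul, hN]
      _ = ENNReal.ofReal ((N:ℝ) * (α / ((N:ℝ) + 1))) := by
          rw [← ENNReal.ofReal_natCast N, ← ENNReal.ofReal_mul (Nat.cast_nonneg N)]
      _ ≤ ENNReal.ofReal α := by
          apply ENNReal.ofReal_le_ofReal
          have h1 : (N:ℝ) * (α / ((N:ℝ) + 1)) = α * ((N:ℝ) / ((N:ℝ) + 1)) := by ring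
          have h2 : (N:ℝ) / ((N:ℝ) + 1) ≤ 1 := by
            rw [div_le_one hNpos]; linarith
          calc (N:ℝ) * (α / ((N:ℝ) + 1)) = α * ((N:ℝ) / ((N:ℝ) + 1)) := h1
            _ ≤ α * 1 := mul_le_mul_of_nonneg_left h2 hα.1.le
            _ = α := mul_one α
  haveI : IsProbabilityMeasure μ := by rw [hμ]; infer_instance
  -- the good event implies the inclusion
  have hsubset : Bᶜ ⊆ {s : Fin m → Z | {w ∈ W | diamRisk ℓ γ s w ≤ δ} ⊆
      {w ∈ W | trueRisk P ℓ w ≤ δ + β / Real.sqrt m}} := by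
    intro s hs w hw
    obtain ⟨hwW, hwd⟩ := hw
    have hw' := hcov hwW
    simp only [mem_iUnion, exists_prop] at hw'
    obtain ⟨x, hxt, hwball⟩ := hw'
    obtain ⟨huW, hud, humax, hσ1, _⟩ := hprop x hxt
    have hxT : x ∈ T := (hmemT x).2 hxt
    -- s is not in Bad x
    have hnotbad : s ∉ Bad x := fun hbad => hs (mem_biUnion hxT hbad)
    have hlt : ∑ i, (trueRisk P ℓ (u x) - ℓ (u x) (s i)) < β * Real.sqrt m :=
      not_le.mp hnotbad
    -- rewrite the sum
    have hsum : ∑ i, (trueRisk P ℓ (u x) - ℓ (u x) (s i)) =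
        (m:ℝ) * (trueRisk P ℓ (u x) - empRisk ℓ s (u x)) := by
      rw [Finset.sum_sub_distrib, Finset.sum_const, Finset.card_univ, Fintype.card_fin,
        nsmul_eq_mul, empRisk]
      field_simp
    rw [hsum] at hlt
    have hq : Real.sqrt m * Real.sqrt m = (m:ℝ) := Real.mul_self_sqrt hm0.le
    have h3 : trueRisk P ℓ (u x) - empRisk ℓ s (u x) < β / Real.sqrt m := by
      rw [lt_div_iff₀ hsm]
      nlinarith [hlt, hsm, hq]
    -- true risk of w is at most that of u x
    have h1 : trueRisk P ℓ w ≤ trueRisk P ℓ (u x) :=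
      humax w ⟨hwW, ball_subset_closedBall hwball⟩
    -- empirical risk at u x is at most the diametrical risk at w
    have h4 : empRisk ℓ s (u x) ≤ diamRisk ℓ γ s w := by
      have hvmem : u x - w ∈ closedBall (0:E) γ := by
        rw [mem_closedBall_zero_iff]
        calc ‖u x - w‖ = dist (u x) w := (dist_eq_norm _ _).symm
          _ ≤ dist (u x) x + dist x w := dist_triangle _ _ _
          _ ≤ γ / 2 + γ / 2 := by
              have hxw : dist x w < γ / 2 := by
                rw [dist_comm]; exact mem_ball.mp hwball
              linarith
          _ = γ := by ring
      have hbdd : BddAbove (Set.range fun v : closedBall (0:E) γ =>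
          empRisk ℓ s (w + ↑v)) := by
        have himg : (fun v => empRisk ℓ s (w + v)) '' closedBall (0:E) γ =
            Set.range fun v : closedBall (0:E) γ => empRisk ℓ s (w + ↑v) :=
          Set.image_eq_range _ _
        rw [← himg]
        refine ((isCompact_closedBall (0:E) γ).image ?_).bddAbove
        have : Continuous fun v : E => empRisk ℓ s (w + v) := by
          simp only [empRisk]
          exact continuous_const.mul (continuous_finset_sum _ fun i _ =>
            (hcont (s i)).comp (continuous_const.add continuous_id))
        exact this
      have := le_ciSup hbdd (⟨u x - w, hvmem⟩ : closedBall (0:E) γ)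
      rw [diamRisk]
      simpa [add_sub_cancel] using this
    exact ⟨hwW, by linarith⟩
  refine le_trans ?_ (measure_mono hsubset)
  rw [prob_compl_eq_one_sub hBmeas]
  calc ENNReal.ofReal (1 - α) = 1 - ENNReal.ofReal α := by
        rw [ENNReal.ofReal_sub 1 hα.1.le, ENNReal.ofReal_one]
    _ ≤ 1 - μ B := tsub_le_tsub_left hBle 1
end

section
/- Suppose W ⊆ ℝⁿ is compact, ℓ : ℝⁿ × Z → ℝ is a locally sup-integrable Carathéodory function, and for every w ∈ W the random variable ℓ(w,·) − R(w) is subgaussian. Then for any α ∈ (0,1) and γ > 0 there exists β > 0, independent of m, such that for every m ≥ 1 and every measurable map w_m^γ : Z^m → W (e.g., any solution produced by diametrical risk minimization), ℙ^m( R(w_m^γ) ≤ R_m^γ(w_m^γ) + β m^{−1/2} ) ≥ 1 − α. -/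
open MeasureTheory Metric Set Filter Topology ENNReal


lemma bddAbove_range_comp_subtype {E : Type*} [TopologicalSpace E] {K : Set E}
    (hK : IsCompact K) {f : E → ℝ} (hf : Continuous f) :
    BddAbove (Set.range fun x : K => f ↑x) := by
  rw [← Set.image_eq_range]
  exact hK.bddAbove_image hf.continuousOn

lemma dominated {E Z : Type*} [NormedAddCommGroup E] [NormedSpace ℝ E] [FiniteDimensional ℝ E]
    (ℓ : E → Z → ℝ) (hcont : ∀ z, Continuous fun w => ℓ w z)
    (x : E) (ρ : ℝ) {w : E} (hw : w ∈ closedBall x ρ) (z : Z) :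
    ℓ w z ≤ max 0 (⨆ u : closedBall x ρ, ℓ (↑u) z) :=
  le_max_of_le_right (le_ciSup (bddAbove_range_comp_subtype (isCompact_closedBall x ρ) (hcont z)) ⟨w, hw⟩)


/-- On each compact set, the true risk attains its max. -/
lemma exists_trueRisk_max {E Z : Type*} [NormedAddCommGroup E] [NormedSpace ℝ E]
    [FiniteDimensional ℝ E] [MeasurableSpace Z] (P : Measure Z)
    (ℓ : E → Z → ℝ)
    (hcont : ∀ z, Continuous fun w => ℓ w z)
    (hmeas : ∀ w, Measurable fun z => ℓ w z)
    (hint : ∀ w, Integrable (fun z => ℓ w z) P)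
    (hlocsup : ∀ wbar : E, ∃ ρ > (0 : ℝ),
      Integrable (fun z => max 0 (⨆ w : closedBall wbar ρ, ℓ (↑w) z)) P)
    {K : Set E} (hK : IsCompact K) (hKne : K.Nonempty) :
    ∃ x ∈ K, ∀ w ∈ K, trueRisk P ℓ w ≤ trueRisk P ℓ x := by
  classical
  set R : E → ℝ := trueRisk P ℓ with hR
  -- choose radii and dominating functions
  choose ρ hρ hgint using hlocsup
  set g : E → Z → ℝ := fun x z => max 0 (⨆ w : closedBall x (ρ x), ℓ (↑w) z) with hg
  have hgnn : ∀ x z, 0 ≤ g x z := fun x z => le_max_left _ _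
  have hRle : ∀ x : E, ∀ w ∈ closedBall x (ρ x), R w ≤ ∫ z, g x z ∂P := by
    intro x w hw
    exact integral_mono (hint w) (hgint x) (fun z => dominated ℓ hcont x (ρ x) hw z)
  -- bounded above on K
  obtain ⟨t, ht⟩ := hK.elim_finite_subcover (fun x : K => ball (↑x) (ρ ↑x))
    (fun x => isOpen_ball) (fun w hw => mem_iUnion.2 ⟨⟨w, hw⟩, mem_ball_self (hρ w)⟩)
  have hbdd : ∀ w ∈ K, R w ≤ ∑ i ∈ t, ∫ z, g (↑i) z ∂P := by
    intro w hw
    obtain ⟨i, hi, hwi⟩ := mem_iUnion₂.1 (ht hw)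
    calc R w ≤ ∫ z, g (↑i) z ∂P := hRle _ w (ball_subset_closedBall hwi)
    _ ≤ ∑ i ∈ t, ∫ z, g (↑i) z ∂P :=
        Finset.single_le_sum (f := fun j : K => ∫ z, g (↑j) z ∂P) (fun j _ => integral_nonneg (hgnn _)) hi
  have hBdd : BddAbove (R '' K) := by
    refine ⟨∑ i ∈ t, ∫ z, g (↑i) z ∂P, ?_⟩
    rintro y ⟨w, hw, rfl⟩; exact hbdd w hw
  set s := sSup (R '' K) with hs
  -- approximating sequence
  have hseq : ∀ n : ℕ, ∃ w ∈ K, s - 1 / (n + 1) < R w := by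
    intro n
    have hlt : s - 1 / (n + 1 : ℝ) < sSup (R '' K) := by
      have : (0:ℝ) < 1 / (n+1) := by positivity
      rw [← hs]; linarith
    obtain ⟨y, ⟨w, hw, rfl⟩, hy⟩ := exists_lt_of_lt_csSup (hKne.image R) hlt
    exact ⟨w, hw, hy⟩
  choose w hwK hwR using hseq
  have hws : Tendsto (fun n => R (w n)) atTop (𝓝 s) := by
    have h1 : Tendsto (fun n : ℕ => s - 1 / (n + 1)) atTop (𝓝 s) := by
      simpa using Tendsto.sub (tendsto_const_nhds : Tendsto (fun _ : ℕ => s) atTop (𝓝 s))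
        tendsto_one_div_add_atTop_nhds_zero_nat
    exact tendsto_of_tendsto_of_tendsto_of_le_of_le h1 tendsto_const_nhds
      (fun n => (hwR n).le) (fun n => le_csSup hBdd ⟨w n, hwK n, rfl⟩)
  obtain ⟨x, hxK, φ, hφ, hφt⟩ := hK.tendsto_subseq hwK
  refine ⟨x, hxK, fun u hu => ?_⟩
  have hsx : s ≤ R x := by
    -- Fatou argument on ball around x
    have hmem : ∀ᶠ n in atTop, w (φ n) ∈ closedBall x (ρ x) :=
      hφt (closedBall_mem_nhds x (hρ x))
    set G : Z → ℝ := g x with hG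
    have hGint : Integrable G P := hgint x
    have hGmeas : AEMeasurable G P := hGint.aestronglyMeasurable.aemeasurable
    set F : ℕ → Z → ℝ≥0∞ := fun n z => ENNReal.ofReal (G z - ℓ (w (φ n)) z) with hF
    have hFmeas : ∀ n, AEMeasurable (F n) P := fun n =>
      ENNReal.measurable_ofReal.comp_aemeasurable (hGmeas.sub (hmeas _).aemeasurable)
    have hlim : ∀ z, Tendsto (fun n => F n z) atTop (𝓝 (ENNReal.ofReal (G z - ℓ x z))) := by
      intro z
      refine (ENNReal.continuous_ofReal.tendsto _).comp ?_
      exact tendsto_const_nhds.sub (((hcont z).tendsto x).comp hφt)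
    have fatou := lintegral_liminf_le' (μ := P) (u := atTop) hFmeas
    have hleft : ∫⁻ z, liminf (fun n => F n z) atTop ∂P = ENNReal.ofReal (∫ z, (G z - ℓ x z) ∂P) := by
      rw [ofReal_integral_eq_lintegral_ofReal (f := fun z => G z - ℓ x z) (hGint.sub (hint x))
        (Eventually.of_forall fun z => sub_nonneg.2 (dominated ℓ hcont x (ρ x) (mem_closedBall_self (hρ x).le) z))]
      exact lintegral_congr fun z => (hlim z).liminf_eq
    have hright : liminf (fun n => ∫⁻ z, F n z ∂P) atTop = ENNReal.ofReal (∫ z, G z ∂P - s) := by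
      have heq : ∀ᶠ n in atTop, (∫⁻ z, F n z ∂P) = ENNReal.ofReal ((∫ z, G z ∂P) - R (w (φ n))) := by
        filter_upwards [hmem] with n hn
        calc (∫⁻ z, F n z ∂P) = ∫⁻ z, ENNReal.ofReal (G z - ℓ (w (φ n)) z) ∂P := rfl
        _ = ENNReal.ofReal (∫ z, (G z - ℓ (w (φ n)) z) ∂P) :=
            (ofReal_integral_eq_lintegral_ofReal (f := fun z => G z - ℓ (w (φ n)) z)
              (hGint.sub (hint _))
              (Eventually.of_forall fun z => sub_nonneg.2 (dominated ℓ hcont x (ρ x) hn z))).symm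
        _ = ENNReal.ofReal ((∫ z, G z ∂P) - R (w (φ n))) := by
            rw [integral_sub hGint (hint _)]; rfl
      rw [liminf_congr heq]
      refine Tendsto.liminf_eq ?_
      exact (ENNReal.continuous_ofReal.tendsto _).comp
        (tendsto_const_nhds.sub (hws.comp hφ.tendsto_atTop))
    rw [hleft, hright] at fatou
    have hsG : s ≤ ∫ z, G z ∂P := by
      have : ∀ᶠ n in atTop, R (w (φ n)) ≤ ∫ z, G z ∂P := by
        filter_upwards [hmem] with n hn; exact hRle x _ hn
      exact le_of_tendsto (hws.comp hφ.tendsto_atTop) this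
    rw [integral_sub hGint (hint x)] at fatou
    have h5 := (ENNReal.ofReal_le_ofReal_iff (by linarith)).1 fatou
    have hRx : R x = ∫ a, ℓ x a ∂P := rfl
    linarith [h5]
  exact le_trans (le_csSup hBdd ⟨u, hu, rfl⟩) hsx

lemma chernoff {Z : Type*} [MeasurableSpace Z] (P : Measure Z) [IsProbabilityMeasure P]
    (X : Z → ℝ) {σ Kv : ℝ} (hsg : IsSubgaussianWith P X σ) (hσ : σ ^ 2 ≤ Kv) (hK : 0 < Kv)
    (m : ℕ) (hm : 1 ≤ m) {t : ℝ} (ht : 0 < t) :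
    Measure.pi (fun _ : Fin m => P) {s | ∑ i, X (s i) ≤ -((m : ℝ) * t)} ≤
      ENNReal.ofReal (Real.exp (-((m : ℝ) * t ^ 2) / (2 * Kv))) := by
  letI : MeasureSpace Z := { volume := P }
  haveI : SigmaFinite (volume : Measure Z) := inferInstanceAs (SigmaFinite P)
  haveI : IsProbabilityMeasure (volume : Measure Z) := inferInstanceAs (IsProbabilityMeasure P)
  set τ : ℝ := t / Kv with hτ
  have hτpos : 0 < τ := div_pos ht hK
  set f : (Fin m → Z) → ℝ := fun s => ∏ i, Real.exp (-τ * X (s i)) with hf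
  have hfint : Integrable f (volume : Measure (Fin m → Z)) :=
    Integrable.fintype_prod (f := fun _ : Fin m => fun z => Real.exp (-τ * X z))
      (fun _ => (hsg.2 (-τ)).1)
  have hfnn : 0 ≤ᵐ[volume (α := Fin m → Z)] f :=
    Eventually.of_forall fun s => Finset.prod_nonneg fun i _ => (Real.exp_pos _).le
  set ε : ℝ := Real.exp (τ * ((m : ℝ) * t)) with hε
  have hεpos : 0 < ε := Real.exp_pos _
  have hmarkov := mul_meas_ge_le_integral_of_nonneg hfnn hfint ε
  -- the integral is a power
  have hipow : ∫ s, f s = (∫ z, Real.exp (-τ * X z) ∂P) ^ m := by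
    rw [hf]
    show ∫ s, (∏ i, Real.exp (-τ * X (s i))) ∂(Measure.pi fun _ : Fin m => (volume : Measure Z)) = _
    rw [integral_fintype_prod_eq_pow (ι := Fin m) (fun z => Real.exp (-τ * X z))]
    simp only [Fintype.card_fin]
    rfl
  have hibdd : ∫ s, f s ≤ Real.exp ((m : ℝ) * (Kv * τ ^ 2 / 2)) := by
    rw [hipow]
    calc (∫ z, Real.exp (-τ * X z) ∂P) ^ m
        ≤ Real.exp (σ ^ 2 * (-τ) ^ 2 / 2) ^ m := by
          apply pow_le_pow_left₀ (integral_nonneg fun z => (Real.exp_pos _).le) (hsg.2 (-τ)).2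
      _ ≤ Real.exp (Kv * τ ^ 2 / 2) ^ m := by
          apply pow_le_pow_left₀ (Real.exp_pos _).le
          apply Real.exp_le_exp.2
          have : τ ^ 2 ≥ 0 := sq_nonneg τ
          nlinarith
      _ = Real.exp ((m : ℝ) * (Kv * τ ^ 2 / 2)) := by
          rw [← Real.exp_nat_mul]
  -- event inclusion
  have hsub : {s : Fin m → Z | ∑ i, X (s i) ≤ -((m : ℝ) * t)} ⊆ {s | ε ≤ f s} := by
    intro s hs
    have hfs : f s = Real.exp (-τ * ∑ i, X (s i)) := by
      show (∏ i, Real.exp (-τ * X (s i))) = _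
      rw [← Real.exp_sum, ← Finset.mul_sum]
    rw [Set.mem_setOf_eq, hfs]
    show Real.exp (τ * ((m : ℝ) * t)) ≤ _
    apply Real.exp_le_exp.2
    have hs' : ∑ i, X (s i) ≤ -((m : ℝ) * t) := hs
    nlinarith
  -- put it together
  have hμpi : Measure.pi (fun _ : Fin m => P) = (volume : Measure (Fin m → Z)) := rfl
  rw [hμpi]
  set μ := (volume : Measure (Fin m → Z))
  haveI : IsProbabilityMeasure μ :=
    inferInstanceAs (IsProbabilityMeasure (Measure.pi fun _ : Fin m => (volume : Measure Z)))
  have h1 : (μ {s | ε ≤ f s}).toReal ≤ Real.exp (-((m : ℝ) * t ^ 2) / (2 * Kv)) := by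
    have h2 : ε * (μ {s | ε ≤ f s}).toReal ≤ Real.exp ((m : ℝ) * (Kv * τ ^ 2 / 2)) :=
      le_trans hmarkov hibdd
    have h3 : (μ {s | ε ≤ f s}).toReal ≤ Real.exp ((m : ℝ) * (Kv * τ ^ 2 / 2)) / ε := by
      rw [le_div_iff₀ hεpos]; linarith [h2]
    refine h3.trans ?_
    show Real.exp ((m : ℝ) * (Kv * τ ^ 2 / 2)) / Real.exp (τ * ((m : ℝ) * t)) ≤ _
    rw [← Real.exp_sub]
    apply Real.exp_le_exp.2
    apply le_of_eq
    rw [hτ]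
    have hKne : Kv ≠ 0 := hK.ne'
    field_simp
    ring
  calc μ {s | ∑ i, X (s i) ≤ -((m : ℝ) * t)} ≤ μ {s | ε ≤ f s} := measure_mono hsub
    _ = ENNReal.ofReal (μ {s | ε ≤ f s}).toReal := (ENNReal.ofReal_toReal (measure_ne_top μ _)).symm
    _ ≤ ENNReal.ofReal (Real.exp (-((m : ℝ) * t ^ 2) / (2 * Kv))) := ENNReal.ofReal_le_ofReal h1

/-- **any DRM output generalizes.** Suppose `W ⊆ ℝⁿ` is compact, `ℓ` is a
locally sup-integrable Carathéodory function, and for every `w ∈ W` the random variable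
`ℓ(w,·) − R(w)` is subgaussian. Then for any `α ∈ (0,1)` and `γ > 0` there exists
`β > 0`, independent of `m`, such that for every `m ≥ 1` and every measurable map
`w_m^γ : Z^m → W` (e.g. any solution produced by DRM),
`ℙ^m( R(w_m^γ) ≤ R_m^γ(w_m^γ) + β m^{−1/2} ) ≥ 1 − α`. -/
theorem drm_solution_generalizes
    {E Z : Type*} [NormedAddCommGroup E] [NormedSpace ℝ E] [FiniteDimensional ℝ E]
    [MeasurableSpace E] [BorelSpace E]
    [MeasurableSpace Z] (P : Measure Z) [IsProbabilityMeasure P]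
    (W : Set E) (hW : IsCompact W)
    (ℓ : E → Z → ℝ)
    (hcont : ∀ z, Continuous fun w => ℓ w z)
    (hmeas : ∀ w, Measurable fun z => ℓ w z)
    (hint : ∀ w, Integrable (fun z => ℓ w z) P)
    (hlocsup : ∀ wbar : E, ∃ ρ > (0 : ℝ),
      Integrable (fun z => max 0 (⨆ w : closedBall wbar ρ, ℓ (↑w) z)) P)
    (hsg : ∀ w ∈ W, ∃ σ : ℝ,
      IsSubgaussianWith P (fun z => ℓ w z - trueRisk P ℓ w) σ)
    (α γ : ℝ) (hα : α ∈ Set.Ioo (0 : ℝ) 1) (hγ : 0 < γ) :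
    ∃ β > (0 : ℝ), ∀ m : ℕ, 1 ≤ m →
      ∀ wmγ : (Fin m → Z) → E, Measurable wmγ → (∀ s, wmγ s ∈ W) →
        ENNReal.ofReal (1 - α) ≤
          Measure.pi (fun _ : Fin m => P)
            {s | trueRisk P ℓ (wmγ s) ≤ diamRisk ℓ γ s (wmγ s) + β / Real.sqrt m} := by
  classical
  obtain ⟨hα0, hα1⟩ := hα
  by_cases hWne : W.Nonempty
  case neg =>
    refine ⟨1, one_pos, fun m hm wmγ _ hmem => ?_⟩
    have hZ : Nonempty Z := by
      by_contra h
      rw [not_nonempty_iff] at h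
      have h1 := measure_univ (μ := P)
      rw [Set.univ_eq_empty_iff.2 h] at h1
      simp at h1
    obtain ⟨z0⟩ := hZ
    exact absurd (hmem fun _ => z0)
      (by rw [Set.not_nonempty_iff_eq_empty.1 hWne]; exact Set.notMem_empty _)
  case pos =>
  obtain ⟨t, ht⟩ := hW.elim_finite_subcover (fun x : W => ball (↑x) (γ / 2))
    (fun _ => isOpen_ball)
    (fun w hw => mem_iUnion.2 ⟨⟨w, hw⟩, mem_ball_self (by linarith)⟩)
  have htne : t.Nonempty := by
    obtain ⟨w, hw⟩ := hWne
    obtain ⟨i, hi, _⟩ := mem_iUnion₂.1 (ht hw)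
    exact ⟨i, hi⟩
  have hmax : ∀ i : W, ∃ x ∈ closedBall (↑i) (γ / 2) ∩ W,
      ∀ w ∈ closedBall (↑i) (γ / 2) ∩ W, trueRisk P ℓ w ≤ trueRisk P ℓ x := fun i =>
    exists_trueRisk_max P ℓ hcont hmeas hint hlocsup (hW.inter_left isClosed_closedBall)
      ⟨↑i, mem_closedBall_self (by linarith), i.2⟩
  choose ws hws hwsmax using hmax
  have hwsW : ∀ i, ws i ∈ W := fun i => (hws i).2
  choose σs hσs using fun i : W => hsg (ws i) (hwsW i)
  set Kv : ℝ := 1 + ∑ i ∈ t, σs i ^ 2 with hKv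
  have hKvpos : 0 < Kv :=
    add_pos_of_pos_of_nonneg one_pos (Finset.sum_nonneg fun i _ => sq_nonneg _)
  have hKvle : ∀ i ∈ t, σs i ^ 2 ≤ Kv := by
    intro i hi
    have h := Finset.single_le_sum (f := fun j => σs j ^ 2) (fun j _ => sq_nonneg _) hi
    have h' : σs i ^ 2 ≤ ∑ x ∈ t, σs x ^ 2 := h
    rw [hKv]; linarith
  set N : ℕ := t.card with hN
  have hN1 : (1 : ℝ) ≤ N := by
    have := Finset.card_pos.2 htne
    exact_mod_cast this
  set β : ℝ := Real.sqrt (2 * Kv * Real.log (N / α)) + 1 with hβ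
  have hβpos : 0 < β := by positivity
  have hNα : (1 : ℝ) ≤ N / α := by
    rw [le_div_iff₀ hα0]; nlinarith
  have hkey : (N : ℝ) * Real.exp (-(β ^ 2) / (2 * Kv)) ≤ α := by
    have hx : 0 ≤ 2 * Kv * Real.log (N / α) :=
      mul_nonneg (by linarith) (Real.log_nonneg hNα)
    have hβ2 : 2 * Kv * Real.log (N / α) ≤ β ^ 2 := by
      rw [hβ]
      nlinarith [Real.sq_sqrt hx, Real.sqrt_nonneg (2 * Kv * Real.log (N / α))]
    have h1 : -(β ^ 2) / (2 * Kv) ≤ -Real.log (N / α) := by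
      rw [div_le_iff₀ (by linarith : (0:ℝ) < 2 * Kv)]
      nlinarith
    have h2 : Real.exp (-(β ^ 2) / (2 * Kv)) ≤ α / N := by
      calc Real.exp (-(β ^ 2) / (2 * Kv)) ≤ Real.exp (-Real.log (N / α)) :=
            Real.exp_le_exp.2 h1
        _ = α / N := by
            rw [Real.exp_neg, Real.exp_log (by positivity), inv_div]
    calc (N : ℝ) * Real.exp (-(β ^ 2) / (2 * Kv)) ≤ (N : ℝ) * (α / N) :=
          mul_le_mul_of_nonneg_left h2 (by positivity)
      _ = α := by field_simp
  refine ⟨β, hβpos, ?_⟩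
  intro m hm wmγ _ hmemW
  set μ := Measure.pi (fun _ : Fin m => P) with hμ
  haveI : IsProbabilityMeasure μ := by
    rw [hμ]; infer_instance
  have hmpos : (0 : ℝ) < m := by exact_mod_cast hm
  have hsqpos : 0 < Real.sqrt m := Real.sqrt_pos.2 hmpos
  set tq : ℝ := β / Real.sqrt m with htq
  have htqpos : 0 < tq := div_pos hβpos hsqpos
  set A : W → Set (Fin m → Z) :=
    fun i => {s | trueRisk P ℓ (ws i) - tq ≤ empRisk ℓ s (ws i)} with hA
  -- event inclusion
  have hincl : (⋂ i ∈ t, A i) ⊆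
      {s | trueRisk P ℓ (wmγ s) ≤ diamRisk ℓ γ s (wmγ s) + β / Real.sqrt m} := by
    intro s hsmem
    obtain ⟨i, hi, hwi⟩ := mem_iUnion₂.1 (ht (hmemW s))
    have hAi : s ∈ A i := Set.mem_iInter₂.1 hsmem i hi
    set w := wmγ s with hwdef
    have h1 : trueRisk P ℓ w ≤ trueRisk P ℓ (ws i) :=
      hwsmax i w ⟨ball_subset_closedBall hwi, hmemW s⟩
    have h2 : trueRisk P ℓ (ws i) - tq ≤ empRisk ℓ s (ws i) := hAi
    have hv : ws i - w ∈ closedBall (0 : E) γ := by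
      rw [mem_closedBall_zero_iff]
      have e1 : ‖ws i - w‖ ≤ ‖ws i - ↑i‖ + ‖(↑i : E) - w‖ := by
        calc ‖ws i - w‖ = ‖(ws i - ↑i) + ((↑i : E) - w)‖ := by rw [sub_add_sub_cancel]
          _ ≤ _ := norm_add_le _ _
      have e2 : ‖ws i - ↑i‖ ≤ γ / 2 := mem_closedBall_iff_norm.1 (hws i).1
      have e3 : ‖(↑i : E) - w‖ ≤ γ / 2 := by
        rw [norm_sub_rev]
        exact (mem_ball_iff_norm.1 hwi).le
      linarith
    have h3 : empRisk ℓ s (ws i) ≤ diamRisk ℓ γ s w := by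
      have hb : BddAbove (Set.range fun v : closedBall (0 : E) γ => empRisk ℓ s (w + ↑v)) := by
        have hc : Continuous fun u : E => empRisk ℓ s u := by
          unfold empRisk
          exact continuous_const.mul (continuous_finset_sum _ fun j _ => hcont (s j))
        exact bddAbove_range_comp_subtype (isCompact_closedBall _ _)
          (f := fun u => empRisk ℓ s (w + u)) (hc.comp (continuous_const.add continuous_id))
      have h4 := le_ciSup hb ⟨ws i - w, hv⟩
      have h5 : w + (ws i - w) = ws i := by abel
      rw [h5] at h4
      exact h4
    show trueRisk P ℓ w ≤ diamRisk ℓ γ s w + β / Real.sqrt m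
    have : tq = β / Real.sqrt m := htq
    linarith
  -- probability of each bad event
  have hAc : ∀ i ∈ t, μ ((A i)ᶜ) ≤ ENNReal.ofReal (Real.exp (-(β ^ 2) / (2 * Kv))) := by
    intro i hi
    have hsub2 : (A i)ᶜ ⊆
        {s : Fin m → Z | ∑ j, (ℓ (ws i) (s j) - trueRisk P ℓ (ws i)) ≤ -((m : ℝ) * tq)} := by
      intro s hs
      simp only [hA, Set.mem_compl_iff, Set.mem_setOf_eq, not_le] at hs
      show ∑ j, (ℓ (ws i) (s j) - trueRisk P ℓ (ws i)) ≤ -((m : ℝ) * tq)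
      rw [Finset.sum_sub_distrib, Finset.sum_const, Finset.card_univ, Fintype.card_fin,
        nsmul_eq_mul]
      have hsum : (1 / (m : ℝ)) * ∑ j, ℓ (ws i) (s j) < trueRisk P ℓ (ws i) - tq := hs
      have h6 : ∑ j, ℓ (ws i) (s j) < (m : ℝ) * (trueRisk P ℓ (ws i) - tq) := by
        calc ∑ j, ℓ (ws i) (s j) = (m : ℝ) * ((1 / (m : ℝ)) * ∑ j, ℓ (ws i) (s j)) := by
              field_simp
          _ < (m : ℝ) * (trueRisk P ℓ (ws i) - tq) :=
              mul_lt_mul_of_pos_left hsum hmpos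
      nlinarith
    calc μ ((A i)ᶜ) ≤
        μ {s : Fin m → Z | ∑ j, (ℓ (ws i) (s j) - trueRisk P ℓ (ws i)) ≤ -((m : ℝ) * tq)} :=
          measure_mono hsub2
      _ ≤ ENNReal.ofReal (Real.exp (-((m : ℝ) * tq ^ 2) / (2 * Kv))) := by
          rw [hμ]
          exact chernoff P (fun z => ℓ (ws i) z - trueRisk P ℓ (ws i)) (hσs i)
            (hKvle i hi) hKvpos m hm htqpos
      _ = ENNReal.ofReal (Real.exp (-(β ^ 2) / (2 * Kv))) := by
          congr 2
          rw [htq, div_pow, Real.sq_sqrt hmpos.le]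
          field_simp
  have hUnion : μ (⋃ i ∈ t, (A i)ᶜ) ≤ ENNReal.ofReal α := by
    calc μ (⋃ i ∈ t, (A i)ᶜ) ≤ ∑ i ∈ t, μ ((A i)ᶜ) := measure_biUnion_finset_le t _
      _ ≤ ∑ _i ∈ t, ENNReal.ofReal (Real.exp (-(β ^ 2) / (2 * Kv))) := Finset.sum_le_sum hAc
      _ = (N : ℝ≥0∞) * ENNReal.ofReal (Real.exp (-(β ^ 2) / (2 * Kv))) := by
          rw [Finset.sum_const, nsmul_eq_mul, hN]
      _ = ENNReal.ofReal ((N : ℝ) * Real.exp (-(β ^ 2) / (2 * Kv))) := by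
          rw [ENNReal.ofReal_mul (Nat.cast_nonneg N), ENNReal.ofReal_natCast]
      _ ≤ ENNReal.ofReal α := ENNReal.ofReal_le_ofReal hkey
  have h1μ : ENNReal.ofReal (1 - α) ≤ μ (⋂ i ∈ t, A i) := by
    have hc : (⋂ i ∈ t, A i)ᶜ = ⋃ i ∈ t, (A i)ᶜ := by
      simp [Set.compl_iInter]
    have huniv : (1 : ℝ≥0∞) ≤ μ (⋂ i ∈ t, A i) + μ ((⋂ i ∈ t, A i)ᶜ) := by
      calc (1 : ℝ≥0∞) = μ Set.univ := measure_univ.symm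
        _ = μ ((⋂ i ∈ t, A i) ∪ (⋂ i ∈ t, A i)ᶜ) := by rw [Set.union_compl_self]
        _ ≤ _ := measure_union_le _ _
    have h2 : μ ((⋂ i ∈ t, A i)ᶜ) ≤ ENNReal.ofReal α := by rw [hc]; exact hUnion
    have h3 : (1 : ℝ≥0∞) - ENNReal.ofReal α ≤ μ (⋂ i ∈ t, A i) :=
      tsub_le_iff_right.2 (le_trans huniv (add_le_add le_rfl h2))
    refine le_trans ?_ h3
    rw [← ENNReal.ofReal_one, ← ENNReal.ofReal_sub _ hα0.le]
  exact le_trans h1μ (measure_mono hincl)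
end

section
/- Let W ⊆ ℝⁿ, γ > 0, ε ∈ ℝ, and let F, G : ℝⁿ → ℝ be functions. Suppose W₁, …, W_N are closed balls (in a given norm ‖·‖) of radius γ/2 whose union contains W, each with W_k ∩ W nonempty, and for each k let w^k be a maximizer of F over W_k ∩ W. If F(w^k) − G(w^k) ≤ ε for all k = 1, …, N, then for every w ∈ W: F(w) − sup_{‖v‖≤γ} G(w+v) ≤ ε. -/
open Metric Set

/-- **deterministic covering step.** Let `W ⊆ ℝⁿ`, `γ > 0`, `ε ∈ ℝ`,
`F, G : ℝⁿ → ℝ`. Suppose `W₁, …, W_N` are closed balls (in a given norm) of radius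
`γ/2` whose union contains `W`, each with `W_k ∩ W` nonempty, and for each `k` let
`w^k` be a maximizer of `F` over `W_k ∩ W`. If `F(w^k) − G(w^k) ≤ ε` for all `k`, then
for every `w ∈ W`: `F(w) − sup_{‖v‖≤γ} G(w+v) ≤ ε` (the supremum taken in `EReal`,
so that it is meaningful even if `G` is unbounded on the ball). -/
theorem drm_covering_step
    {E : Type*} [NormedAddCommGroup E] [NormedSpace ℝ E]
    (W : Set E) (γ ε : ℝ) (hγ : 0 < γ) (F G : E → ℝ)
    (N : ℕ) (c : Fin N → E)
    (hcover : W ⊆ ⋃ k, closedBall (c k) (γ / 2))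
    (wk : Fin N → E)
    (hwk : ∀ k, wk k ∈ closedBall (c k) (γ / 2) ∩ W)
    (hmax : ∀ k, ∀ w ∈ closedBall (c k) (γ / 2) ∩ W, F w ≤ F (wk k))
    (hgap : ∀ k, F (wk k) - G (wk k) ≤ ε) :
    ∀ w ∈ W,
      (F w : EReal) - (⨆ v : closedBall (0 : E) γ, (G (w + ↑v) : EReal)) ≤ (ε : EReal) := by
  intro w hw
  obtain ⟨_, ⟨k, rfl⟩, hk⟩ := hcover hw
  have hvball : wk k - w ∈ closedBall (0 : E) γ := by
    rw [mem_closedBall_zero_iff]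
    calc ‖wk k - w‖ = ‖(wk k - c k) + (c k - w)‖ := by rw [sub_add_sub_cancel]
      _ ≤ ‖wk k - c k‖ + ‖c k - w‖ := norm_add_le _ _
      _ ≤ γ / 2 + γ / 2 := by
          refine add_le_add ?_ ?_
          · exact mem_closedBall_iff_norm.mp (hwk k).1
          · rw [norm_sub_rev]; exact mem_closedBall_iff_norm.mp hk
      _ = γ := by ring
  set S := ⨆ v : closedBall (0 : E) γ, (G (w + ↑v) : EReal) with hS
  have hGle : (G (wk k) : EReal) ≤ S := by
    have := le_iSup (fun v : closedBall (0 : E) γ => (G (w + ↑v) : EReal)) ⟨_, hvball⟩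
    simpa using this
  rcases eq_or_ne S ⊤ with hStop | hStop
  · rw [hStop]
    simp [EReal.sub_top]
  · rw [EReal.sub_le_iff_le_add (Or.inr (EReal.coe_ne_top ε)) (Or.inl hStop)]
    calc (F w : EReal) ≤ (F (wk k) : EReal) := by
          exact_mod_cast hmax k w ⟨hk, hw⟩
      _ ≤ (ε : EReal) + (G (wk k) : EReal) := by
          rw [← EReal.coe_add]
          exact_mod_cast by linarith [hgap k]
      _ ≤ (ε : EReal) + S := add_le_add_right hGle _
end

section
/- Let κ ∈ (1,∞) and γ ∈ (0,1), and let ℓ be the piecewise linear loss of Example 1 with z taking values 0 and 1 each with probability 1/2. For any z₁,…,z_m ∈ {0,1}, the infimum of the empirical risk is inf_{w∈ℝ} R_m(w) = min{0, ρ_m} · κ/m; consequently, every minimizer w_m^⋆ of R_m over ℝ satisfies R(w_m^⋆) − R_m(w_m^⋆) = max{0, −ρ_m} · κ/m, a quantity proportional to κ and hence to the Lipschitz modulus κ/γ of ℓ(·,z). -/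
open MeasureTheory Set

/-- The piecewise linear loss of Example 1: for `κ ∈ (1,∞)` and `γ ∈ (0,1)`,
`ℓ(w,0) = κw/γ + κ` and `ℓ(w,1) = −κw/γ − κ` on `[−γ,0)`;
`ℓ(w,0) = −κw/γ + κ` and `ℓ(w,1) = κw/γ − κ` on `[0,γ)`; `ℓ(w,z) = 0` otherwise. -/
noncomputable def ex1loss (κ γ : ℝ) (w : ℝ) (z : Fin 2) : ℝ :=
  if w ∈ Set.Ico (-γ) 0 then (if z = 0 then κ * w / γ + κ else -(κ * w / γ) - κ)
  else if w ∈ Set.Ico 0 γ then (if z = 0 then -(κ * w / γ) + κ else κ * w / γ - κ)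
  else 0

/-- `ρ_m = #{i : zᵢ = 0} − #{i : zᵢ = 1}`, as a real number. -/
def ex1rho {m : ℕ} (z : Fin m → Fin 2) : ℝ :=
  ((((Finset.univ.filter fun i => z i = 0).card : ℤ)
    - ((Finset.univ.filter fun i => z i = 1).card : ℤ)) : ℝ)

lemma ex1red0 (κ γ w : ℝ) : ex1loss κ γ w 0 =
    if w ∈ Set.Ico (-γ) 0 then κ * w / γ + κ
    else if w ∈ Set.Ico 0 γ then -(κ * w / γ) + κ else 0 := by
  unfold ex1loss; norm_num

lemma ex1red1 (κ γ w : ℝ) : ex1loss κ γ w 1 =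
    if w ∈ Set.Ico (-γ) 0 then -(κ * w / γ) - κ
    else if w ∈ Set.Ico 0 γ then κ * w / γ - κ else 0 := by
  unfold ex1loss; norm_num

lemma ex1loss_neg (κ γ w : ℝ) : ex1loss κ γ w 1 = -(ex1loss κ γ w 0) := by
  rw [ex1red0, ex1red1]
  split_ifs <;> ring

lemma ex1loss_ne_zero (κ γ w : ℝ) {zz : Fin 2} (h : zz ≠ 0) :
    ex1loss κ γ w zz = -(ex1loss κ γ w 0) := by
  have : zz = 1 := by omega
  rw [this, ex1loss_neg]

lemma ex1loss_bounds (κ γ w : ℝ) (hκ : 1 < κ) (hγ : 0 < γ) :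
    0 ≤ ex1loss κ γ w 0 ∧ ex1loss κ γ w 0 ≤ κ := by
  have hκ0 : (0:ℝ) < κ := by linarith
  rw [ex1red0]
  split_ifs with h1 h2
  · obtain ⟨ha, hb⟩ := h1
    have hlo : -κ ≤ κ * w / γ := by
      rw [le_div_iff₀ hγ]; nlinarith
    have hhi : κ * w / γ ≤ 0 :=
      div_nonpos_of_nonpos_of_nonneg (by nlinarith) hγ.le
    constructor <;> linarith
  · obtain ⟨ha, hb⟩ := h2
    have hlo : 0 ≤ κ * w / γ := div_nonneg (by nlinarith) hγ.le
    have hhi : κ * w / γ ≤ κ := by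
      rw [div_le_iff₀ hγ]; nlinarith
    constructor <;> linarith
  · constructor <;> linarith

lemma ex1loss_zero (κ γ : ℝ) (hγ : 0 < γ) : ex1loss κ γ 0 0 = κ := by
  rw [ex1red0]
  simp [hγ]

lemma ex1loss_one' (κ γ : ℝ) (hγ : 0 < γ) (hγ1 : γ < 1) : ex1loss κ γ 1 0 = 0 := by
  rw [ex1red0]
  have h1 : ¬ ((1:ℝ) < 0) := by norm_num
  have h2 : ¬ ((1:ℝ) < γ) := by linarith
  simp [Set.mem_Ico, h1, h2]

lemma ex1sum (κ γ w : ℝ) {m : ℕ} (z : Fin m → Fin 2) :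
    ∑ i, ex1loss κ γ w (z i) = ex1rho z * ex1loss κ γ w 0 := by
  have key : ∀ i : Fin m, ex1loss κ γ w (z i) =
      if z i = 0 then ex1loss κ γ w 0 else -(ex1loss κ γ w 0) := by
    intro i
    by_cases h : z i = 0
    · simp [h]
    · simp [h, ex1loss_ne_zero κ γ w h]
  rw [Finset.sum_congr rfl (fun i _ => key i), Finset.sum_ite, Finset.sum_const,
    Finset.sum_const]
  have hfilter : (Finset.univ.filter fun i => ¬ z i = 0) =
      (Finset.univ.filter fun i => z i = 1) := by
    apply Finset.filter_congr
    intro i _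
    constructor <;> (intro h; omega)
  rw [hfilter]
  unfold ex1rho
  push_cast
  ring

/-- **Example 1: downward bias of ERM.** For any sample
`z₁,…,z_m ∈ {0,1}`, `inf_{w∈ℝ} R_m(w) = min{0, ρ_m}·κ/m`; consequently every minimizer
`w_m^⋆` of `R_m` over `ℝ` satisfies `R(w_m^⋆) − R_m(w_m^⋆) = max{0, −ρ_m}·κ/m`, where
`R(w) = E_z[ℓ(w,z)]` with `z` uniform on `{0,1}` — a quantity proportional to `κ` and
hence to the Lipschitz modulus `κ/γ` of `ℓ(·,z)`. -/
theorem ex1_erm_bias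
    (κ γ : ℝ) (hκ : 1 < κ) (hγ : 0 < γ) (hγ1 : γ < 1)
    (m : ℕ) (hm : 1 ≤ m) (z : Fin m → Fin 2) :
    (⨅ w : ℝ, (1 / (m : ℝ)) * ∑ i, ex1loss κ γ w (z i) =
        min 0 (ex1rho z) * κ / m) ∧
    (∀ wstar : ℝ,
      (∀ w : ℝ, (1 / (m : ℝ)) * ∑ i, ex1loss κ γ wstar (z i) ≤
          (1 / (m : ℝ)) * ∑ i, ex1loss κ γ w (z i)) →
      (∫ zz, ex1loss κ γ wstar zz ∂((PMF.uniformOfFintype (Fin 2)).toMeasure))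
          - (1 / (m : ℝ)) * ∑ i, ex1loss κ γ wstar (z i)
        = max 0 (-ex1rho z) * κ / m) := by
  have hm0 : (0:ℝ) < m := by exact_mod_cast hm
  set ρ := ex1rho z with hρ
  set F : ℝ → ℝ := fun w => (1 / (m : ℝ)) * ∑ i, ex1loss κ γ w (z i) with hF
  have hFeq : ∀ w, F w = ρ * ex1loss κ γ w 0 / m := by
    intro w; rw [hF]; simp only; rw [ex1sum]; ring
  -- lower bound
  have hlb : ∀ w, min 0 ρ * κ / m ≤ F w := by
    intro w
    rw [hFeq, div_le_div_iff_of_pos_right hm0]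
    obtain ⟨h0, h1⟩ := ex1loss_bounds κ γ w hκ hγ
    rcases le_total 0 ρ with hr | hr
    · rw [min_eq_left hr]; nlinarith
    · rw [min_eq_right hr]; nlinarith
  have hbdd : BddBelow (Set.range F) := ⟨min 0 ρ * κ / m, by
    rintro x ⟨w, rfl⟩; exact hlb w⟩
  -- achieving point
  have hach : ∃ w₀, F w₀ = min 0 ρ * κ / m := by
    rcases le_total 0 ρ with hr | hr
    · refine ⟨1, ?_⟩
      rw [hFeq, ex1loss_one' κ γ hγ hγ1, min_eq_left hr]
      ring
    · refine ⟨0, ?_⟩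
      rw [hFeq, ex1loss_zero κ γ hγ, min_eq_right hr]
  obtain ⟨w₀, hw₀⟩ := hach
  have hinf : (⨅ w : ℝ, F w) = min 0 ρ * κ / m := by
    apply le_antisymm
    · calc (⨅ w : ℝ, F w) ≤ F w₀ := ciInf_le hbdd w₀
        _ = _ := hw₀
    · exact le_ciInf hlb
  constructor
  · exact hinf
  · intro wstar hmin
    -- R(wstar) = 0
    have hR : (∫ zz, ex1loss κ γ wstar zz ∂((PMF.uniformOfFintype (Fin 2)).toMeasure)) = 0 := by
      rw [MeasureTheory.integral_fintype (Integrable.of_finite)]; simp only [Measure.real]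
      rw [Fin.sum_univ_two]
      have hμ : ∀ x : Fin 2, ((PMF.uniformOfFintype (Fin 2)).toMeasure {x}).toReal = 1/2 := by
        intro x
        rw [PMF.toMeasure_apply_singleton _ _ (measurableSet_singleton x),
          PMF.uniformOfFintype_apply]
        simp
      rw [hμ 0, hμ 1, ex1loss_neg]
      simp [smul_eq_mul]
    rw [hR, zero_sub]
    have hFstar : F wstar = min 0 ρ * κ / m := by
      apply le_antisymm
      · rw [← hinf]; exact le_ciInf hmin
      · rw [← hinf]; exact ciInf_le hbdd wstar
    show -(F wstar) = _
    rw [hFstar]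
    rcases le_total 0 ρ with hr | hr
    · rw [min_eq_left hr, max_eq_left (by linarith)]; ring
    · rw [min_eq_right hr, max_eq_right (by linarith)]; ring
end

section
/- Let κ ∈ (1,∞) and γ ∈ (0,1), and let ℓ be the piecewise linear loss of Example 1 with z taking values 0 and 1 each with probability 1/2. For any z₁,…,z_m ∈ {0,1} and every w ∈ ℝ, the diametrical risk satisfies R_m^γ(w) = sup_{|v|≤γ} R_m(w+v) ≥ 0; consequently R(w) − R_m^γ(w) ≤ 0 for every w ∈ ℝ and every realization of the sample, so the diametrical generalization error is zero regardless of the Lipschitz modulus κ/γ. -/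
open MeasureTheory Set

/-- The empirical risk `R_m(w) = (1/m)∑ᵢ ℓ(w,zᵢ)` for Example 1. -/
noncomputable def ex1empRisk (κ γ : ℝ) {m : ℕ} (z : Fin m → Fin 2) (w : ℝ) : ℝ :=
  (1 / (m : ℝ)) * ∑ i, ex1loss κ γ w (z i)

/-- The diametrical risk `R_m^γ(w) = sup_{|v|≤γ} R_m(w+v)` for Example 1. -/
noncomputable def ex1diamRisk (κ γ : ℝ) {m : ℕ} (z : Fin m → Fin 2) (w : ℝ) : ℝ :=
  ⨆ v : Set.Icc (-γ) γ, ex1empRisk κ γ z (w + ↑v)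

lemma ex1loss_le (κ γ : ℝ) (hκ : 0 < κ) (hγ : 0 < γ) (w : ℝ) (z : Fin 2) :
    ex1loss κ γ w z ≤ κ := by
  unfold ex1loss
  split_ifs with h1 hz h2 hz2
  · have : κ * w / γ ≤ 0 := div_nonpos_iff.mpr (Or.inr ⟨by nlinarith [h1.2], hγ.le⟩)
    linarith
  · have : -κ ≤ κ * w / γ := (le_div_iff₀ hγ).mpr (by nlinarith [h1.1])
    linarith
  · have : 0 ≤ κ * w / γ := div_nonneg (by nlinarith [h2.1]) hγ.le
    linarith
  · have : κ * w / γ ≤ κ := (div_le_iff₀ hγ).mpr (by nlinarith [h2.2])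
    linarith
  · linarith

lemma ex1loss_zero_of_ge (κ γ : ℝ) (hγ : 0 < γ) (w : ℝ) (hw : γ ≤ w) (z : Fin 2) :
    ex1loss κ γ w z = 0 := by
  unfold ex1loss
  rw [if_neg, if_neg] <;> simp [Set.mem_Ico] <;> intro h <;> linarith

lemma ex1loss_zero_of_lt (κ γ : ℝ) (hγ : 0 < γ) (w : ℝ) (hw : w < -γ) (z : Fin 2) :
    ex1loss κ γ w z = 0 := by
  unfold ex1loss
  rw [if_neg, if_neg] <;> simp [Set.mem_Ico] <;> intro h <;> linarith

lemma ex1loss_sum (κ γ : ℝ) (w : ℝ) :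
    ex1loss κ γ w 0 + ex1loss κ γ w 1 = 0 := by
  unfold ex1loss
  split_ifs <;> try ring
  all_goals (rename_i h1 h2; first | exact absurd h2 (by decide) | exact absurd rfl h1)

/-- **Example 1: DRM has zero generalization error.** For any sample
`z₁,…,z_m ∈ {0,1}` and every `w ∈ ℝ`, the diametrical risk satisfies
`R_m^γ(w) = sup_{|v|≤γ} R_m(w+v) ≥ 0`; consequently `R(w) − R_m^γ(w) ≤ 0` (with
`R(w) = E_z[ℓ(w,z)]`, `z` uniform on `{0,1}`) for every `w` and every realization of
the sample, regardless of the Lipschitz modulus `κ/γ`. -/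
theorem ex1_drm_zero_generalization_error
    (κ γ : ℝ) (hκ : 1 < κ) (hγ : 0 < γ) (hγ1 : γ < 1)
    (m : ℕ) (hm : 1 ≤ m) (z : Fin m → Fin 2) :
    ∀ w : ℝ,
      0 ≤ ex1diamRisk κ γ z w ∧
      (∫ zz, ex1loss κ γ w zz ∂((PMF.uniformOfFintype (Fin 2)).toMeasure))
          - ex1diamRisk κ γ z w ≤ 0 := by
  intro w
  have hκ0 : 0 < κ := lt_trans one_pos hκ
  have hm0 : (0:ℝ) < m := by exact_mod_cast hm
  have hbdd : BddAbove (Set.range fun v : Set.Icc (-γ) γ => ex1empRisk κ γ z (w + ↑v)) := by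
    refine ⟨κ, ?_⟩
    rintro x ⟨v, rfl⟩
    dsimp only
    unfold ex1empRisk
    have hsum : ∑ i, ex1loss κ γ (w + ↑v) (z i) ≤ m * κ := by
      calc ∑ i, ex1loss κ γ (w + ↑v) (z i) ≤ ∑ _i : Fin m, κ :=
            Finset.sum_le_sum fun i _ => ex1loss_le κ γ hκ0 hγ _ _
        _ = m * κ := by simp
    rw [one_div, inv_mul_le_iff₀ hm0]
    linarith
  have hdiam : 0 ≤ ex1diamRisk κ γ z w := by
    by_cases hw : 0 ≤ w
    · have h0 : ex1empRisk κ γ z (w + ((⟨γ, by constructor <;> linarith⟩ : Set.Icc (-γ) γ) : ℝ)) = 0 := by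
        unfold ex1empRisk
        have : ∀ i : Fin m, ex1loss κ γ (w + γ) (z i) = 0 := fun i =>
          ex1loss_zero_of_ge κ γ hγ _ (by linarith) _
        simp [this]
      calc (0:ℝ) = _ := h0.symm
        _ ≤ _ := le_ciSup hbdd _
    · push_neg at hw
      have h0 : ex1empRisk κ γ z (w + ((⟨-γ, by constructor <;> linarith⟩ : Set.Icc (-γ) γ) : ℝ)) = 0 := by
        unfold ex1empRisk
        have : ∀ i : Fin m, ex1loss κ γ (w + -γ) (z i) = 0 := fun i =>
          ex1loss_zero_of_lt κ γ hγ _ (by linarith) _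
        simp [this]
      calc (0:ℝ) = _ := h0.symm
        _ ≤ _ := le_ciSup hbdd _
  refine ⟨hdiam, ?_⟩
  have hint : (∫ zz, ex1loss κ γ w zz ∂((PMF.uniformOfFintype (Fin 2)).toMeasure)) = 0 := by
    rw [MeasureTheory.integral_fintype (Integrable.of_finite)]
    simp [measureReal_def, PMF.toMeasure_apply_singleton _ _ (MeasurableSet.singleton _),
      PMF.uniformOfFintype_apply, Fin.sum_univ_two]
    linarith [ex1loss_sum κ γ w]
  linarith [hint, hdiam]
end
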